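/- arXiv:1708.07369 — 8 statements merged into one kernel-verified Lean document; each statement's English description precedes it below -/
import Mathlib

section
/- Let F4 = {K_3, P_4}. Then c_1(F4) = g_1(F4) = 2, c_2(F4) = g_2(F4) = 3, and c_k(F4) = g_k(F4) = 2k − 2 for every integer k ≥ 3. In particular, F4 is k-nice for every positive integer k. -/
/-!
A coloring has no monochromatic `K₃` or `P₄` exactly when every color class is a star forest.
A graph with such a `k`-coloring is `t`-colorable for `t ≥ max (k + 1) (2k - 2)`: vertices of
degree `< t` are colored greedily, and if all degrees are at least `t`, double counting shows
that every vertex centers stars of exactly one color and that every edge lies in the star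
centered at one of its ends, so this color is a proper vertex coloring. The bound is attained
by `K_{k+1}` with `{a, b}` colored `min a b` and by a coloring of `K_{2k-2}` built on a
partition of the vertices into `k - 1` pairs.
-/

open SimpleGraph

/-- A monochromatic copy of `H` in `G` under the edge `k`-coloring `col`:
an injective map sending edges of `H` to edges of `G`, all of the same color. -/
def HasMonoCopy {V : Type*} {W : Type*} {k : ℕ} (G : SimpleGraph V)
    (col : Sym2 V → Fin k) (H : SimpleGraph W) : Prop :=
  ∃ (i : Fin k) (f : W ↪ V), ∀ a b : W, H.Adj a b →
    G.Adj (f a) (f b) ∧ col s(f a, f b) = i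

/-- A family of graphs. -/
abbrev GraphFam : Type 1 := Set ((W : Type) × SimpleGraph W)

/-- The coloring `col` of (the edges of) `G` contains no monochromatic copy of
any member of the family `F`. -/
def AvoidsFam {V : Type} {k : ℕ} (G : SimpleGraph V)
    (col : Sym2 V → Fin k) (F : GraphFam) : Prop :=
  ∀ H ∈ F, ¬ HasMonoCopy G col H.2

/-- The set of integers `s` such that the complete graph `K_s` admits a
`k`-coloring of its edges with no monochromatic copy of any member of `F`.
`c_k(F)` is the greatest element of this set. -/
def cSet (k : ℕ) (F : GraphFam) : Set ℕ :=
  {s | ∃ col : Sym2 (Fin s) → Fin k,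
    AvoidsFam (⊤ : SimpleGraph (Fin s)) col F}

/-- The set of integers `s` such that some finite graph `G` with chromatic number `s`
admits a `k`-coloring of its edges with no monochromatic copy of any member of `F`.
`g_k(F)` is the greatest element of this set. -/
def gSet (k : ℕ) (F : GraphFam) : Set ℕ :=
  {s | ∃ (V : Type) (_ : Fintype V) (G : SimpleGraph V)
    (col : Sym2 V → Fin k), G.chromaticNumber = (s : ℕ∞) ∧ AvoidsFam G col F}

/-- The family `F₄ = {K₃, P₄}`. -/
def F4 : GraphFam :=
  {⟨Fin 3, (⊤ : SimpleGraph (Fin 3))⟩, ⟨Fin 4, pathGraph 4⟩}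

namespace SimpleGraph

variable {V α : Type*} (G : SimpleGraph V) (col : Sym2 V → α)

/-- No monochromatic path with three edges and no monochromatic triangle (`x = y`), i.e. every
color class is a star forest. -/
def IsStarForestColoring : Prop :=
  ∀ ⦃x u v y : V⦄, G.Adj x u → G.Adj u v → G.Adj v y → x ≠ v → u ≠ y →
    col s(x, u) = col s(u, v) → col s(u, v) = col s(v, y) → False

variable {G col}

theorem IsStarForestColoring.comap {W : Type*} (h : G.IsStarForestColoring col) (f : W ↪ V) :
    (G.comap f).IsStarForestColoring (col ∘ Sym2.map f) :=
  fun _ _ _ _ hxu huv hvy hxv huy ↦ h hxu huv hvy (f.injective.ne hxv) (f.injective.ne huy)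

open Finset

theorem Colorable.of_induce_compl_singleton {t : ℕ} {v : V} [Fintype (G.neighborSet v)]
    (hv : G.degree v < t) (h : (G.induce {v}ᶜ).Colorable t) : G.Colorable t := by
  classical
  obtain ⟨C⟩ := h
  let g : V → Fin t := fun u ↦ if hu : u = v then ⟨0, by omega⟩ else C ⟨u, hu⟩
  obtain ⟨c, -, hc⟩ := exists_mem_notMem_of_card_lt_card
    (s := (G.neighborFinset v).image g) (t := univ) (by simpa using card_image_le.trans_lt hv)
  have hnbr : ∀ u, G.Adj v u → Function.update g v c u ≠ c := fun u hu hgu ↦ by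
    rw [Function.update_of_ne hu.ne'] at hgu
    exact hc (mem_image.2 ⟨u, (mem_neighborFinset ..).2 hu, hgu⟩)
  refine ⟨Coloring.mk (Function.update g v c) fun {a b} hab ↦ ?_⟩
  by_cases ha : a = v
  · subst ha; rw [Function.update_self]; exact (hnbr b hab).symm
  by_cases hb : b = v
  · subst hb; rw [Function.update_self]; exact hnbr a hab.symm
  rw [Function.update_of_ne ha, Function.update_of_ne hb]
  simpa only [g, dif_neg ha, dif_neg hb] using C.valid (v := ⟨a, ha⟩) (w := ⟨b, hb⟩) hab

section Counting

variable [Fintype V] [DecidableRel G.Adj] [DecidableEq α]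

variable (G col) in
def colorDegree (v : V) (i : α) : ℕ := #{u ∈ G.neighborFinset v | col s(v, u) = i}

variable (G col) in
/-- The colors of the stars with at least two edges centered at `v`. -/
def heavyColors [Fintype α] (v : V) : Finset α := {i | 2 ≤ G.colorDegree col v i}

variable (G col) in
def heavyNeighborFinset (v : V) : Finset V :=
  {u ∈ G.neighborFinset v | 2 ≤ G.colorDegree col v (col s(v, u))}

variable (G col) in
def lightNeighborFinset (v : V) : Finset V :=
  {u ∈ G.neighborFinset v | G.colorDegree col v (col s(v, u)) < 2}

theorem card_heavyNeighborFinset_add_card_lightNeighborFinset (v : V) :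
    #(G.heavyNeighborFinset col v) + #(G.lightNeighborFinset col v) = G.degree v := by
  simp only [heavyNeighborFinset, lightNeighborFinset, ← not_le]
  exact card_filter_add_card_filter_not _

theorem card_lightNeighborFinset_add_card_heavyColors_le [Fintype α] (v : V) :
    #(G.lightNeighborFinset col v) + #(G.heavyColors col v) ≤ Fintype.card α := by
  have hmaps : ∀ u ∈ G.lightNeighborFinset col v, col s(v, u) ∈ (G.heavyColors col v)ᶜ := by
    intro u hu
    simp only [lightNeighborFinset, mem_filter] at hu
    simpa [heavyColors] using hu.2
  have hinj : Set.InjOn (fun u ↦ col s(v, u)) (G.lightNeighborFinset col v) := by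
    intro a ha b hb hab
    simp only [coe_filter, lightNeighborFinset, Set.mem_ofPred_eq] at ha hb
    have hle : G.colorDegree col v (col s(v, a)) ≤ 1 := by omega
    refine card_le_one.mp hle a ?_ b ?_ <;> simp_all
  have := card_le_card_of_injOn _ hmaps hinj
  rw [card_compl] at this
  have := card_le_univ (G.heavyColors col v)
  omega

theorem heavyColors_nonempty [Fintype α] {v : V} (hv : Fintype.card α < G.degree v) :
    (G.heavyColors col v).Nonempty := by
  obtain ⟨i, -, hi⟩ := exists_lt_card_fiber_of_mul_lt_card_of_maps_to
    (s := G.neighborFinset v) (t := univ) (f := fun u ↦ col s(v, u)) (n := 1)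
    (fun _ _ ↦ mem_univ _) (by simpa using hv)
  refine ⟨i, ?_⟩
  simp only [heavyColors, mem_filter, mem_univ, true_and]
  exact hi

theorem IsStarForestColoring.not_heavy_and_heavy (h : G.IsStarForestColoring col) {u v : V}
    (huv : G.Adj u v) (hu : 2 ≤ G.colorDegree col u (col s(u, v)))
    (hv : 2 ≤ G.colorDegree col v (col s(u, v))) : False := by
  obtain ⟨x, hx, hxv⟩ := exists_mem_ne hu v
  obtain ⟨y, hy, hyu⟩ := exists_mem_ne hv u
  simp only [mem_filter, mem_neighborFinset] at hx hy
  exact h hx.1.symm huv hy.1 hxv hyu.symm (by rw [Sym2.eq_swap, hx.2]) hy.2.symm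

/-- No edge is heavy at both ends, so the left side counts each edge of `S` at most once. -/
theorem IsStarForestColoring.sum_card_heavyNeighborFinset_le (h : G.IsStarForestColoring col)
    (S : Finset (Sym2 V))
    (hS : ∀ u v, G.Adj u v → 2 ≤ G.colorDegree col u (col s(u, v)) → s(u, v) ∈ S) :
    ∑ v, #(G.heavyNeighborFinset col v) ≤ #S := by
  rw [← card_sigma]
  refine card_le_card_of_injOn (fun p ↦ s(p.1, p.2)) ?_ ?_
  · rintro ⟨v, u⟩ hp
    simp only [mem_coe, mem_sigma, heavyNeighborFinset, mem_filter, mem_neighborFinset] at hp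
    exact mem_coe.2 (hS v u hp.2.1 hp.2.2)
  · rintro ⟨a, b⟩ hab ⟨c, d⟩ hcd he
    simp only [coe_sigma, Set.mem_sigma_iff, coe_univ, Set.mem_univ, heavyNeighborFinset,
      coe_filter, mem_neighborFinset, Set.mem_ofPred_eq, true_and] at hab hcd
    rcases Sym2.eq_iff.mp he with ⟨rfl, rfl⟩ | ⟨rfl, rfl⟩
    · rfl
    · exact (h.not_heavy_and_heavy hab.1 hab.2 (by rw [Sym2.eq_swap]; exact hcd.2)).elim

theorem IsStarForestColoring.heavy_or_heavy (h : G.IsStarForestColoring col) [DecidableEq V]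
    (hE : #G.edgeFinset ≤ ∑ v, #(G.heavyNeighborFinset col v)) {u v : V} (huv : G.Adj u v) :
    2 ≤ G.colorDegree col u (col s(u, v)) ∨ 2 ≤ G.colorDegree col v (col s(u, v)) := by
  have hmem : s(u, v) ∈ G.edgeFinset := mem_edgeFinset.2 huv
  by_contra! hlight
  have hle := h.sum_card_heavyNeighborFinset_le (G.edgeFinset.erase s(u, v)) ?_
  · rw [card_erase_of_mem hmem] at hle
    have : 0 < #G.edgeFinset := card_pos.2 ⟨_, hmem⟩
    omega
  · intro a b hab ha
    refine mem_erase.2 ⟨?_, mem_edgeFinset.2 hab⟩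
    rintro he
    rcases Sym2.eq_iff.mp he with ⟨rfl, rfl⟩ | ⟨rfl, rfl⟩
    · exact (hlight.1.not_ge ha).elim
    · exact (hlight.2.not_ge (by rwa [Sym2.eq_swap])).elim

/-- With `h v` heavy colors at `v`, double counting gives
`2|E| ≤ |E| + ∑ v, (k - h v) ≤ |E| + n (k - 1) ≤ 2|E|`, so every inequality is tight. -/
theorem IsStarForestColoring.sum_card_heavyColors_le_and_card_edgeFinset_le [Fintype α]
    (h : G.IsStarForestColoring col) (hk : ∀ v, Fintype.card α < G.degree v)
    (hk' : ∀ v, 2 * (Fintype.card α - 1) ≤ G.degree v) :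
    ∑ v, #(G.heavyColors col v) ≤ Fintype.card V ∧
      #G.edgeFinset ≤ ∑ v, #(G.heavyNeighborFinset col v) := by
  set k := Fintype.card α
  set n := Fintype.card V
  have hdeg : ∑ v, (#(G.heavyNeighborFinset col v) + #(G.lightNeighborFinset col v)) =
      2 * #G.edgeFinset := by
    simp_rw [card_heavyNeighborFinset_add_card_lightNeighborFinset]
    exact G.sum_degrees_eq_twice_card_edges
  have hlight : ∑ v, (#(G.lightNeighborFinset col v) + #(G.heavyColors col v)) ≤ n * k :=
    (sum_le_sum fun v _ ↦ card_lightNeighborFinset_add_card_heavyColors_le v).trans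
      (by simp [n, k])
  have hone : n ≤ ∑ v, #(G.heavyColors col v) := by
    simpa [n] using sum_le_sum fun v (_ : v ∈ univ) ↦
      Nat.one_le_iff_ne_zero.2 (card_ne_zero.2 (heavyColors_nonempty (col := col) (hk v)))
  have hheavy : ∑ v, #(G.heavyNeighborFinset col v) ≤ #G.edgeFinset :=
    h.sum_card_heavyNeighborFinset_le _ fun _ _ huv _ ↦ mem_edgeFinset.2 huv
  have hmin : n * (2 * (k - 1)) ≤ 2 * #G.edgeFinset := by
    rw [← G.sum_degrees_eq_twice_card_edges]
    simpa [n] using sum_le_sum fun v (_ : v ∈ univ) ↦ hk' v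
  have hnk : n * k ≤ n * (k - 1) + n := by
    rw [← Nat.mul_succ]; exact Nat.mul_le_mul_left _ (by omega)
  rw [sum_add_distrib] at hdeg hlight
  constructor <;> linarith

/-- In the extremal situation each vertex centers stars of a single color and every edge belongs
to the star of one of its ends, so that color is a proper vertex coloring. -/
theorem IsStarForestColoring.colorable_of_forall_card_lt_degree [Fintype α]
    (h : G.IsStarForestColoring col) (hk : ∀ v, Fintype.card α < G.degree v)
    (hk' : ∀ v, 2 * (Fintype.card α - 1) ≤ G.degree v) : G.Colorable (Fintype.card α) := by
  classical
  obtain ⟨hcard, hE⟩ := h.sum_card_heavyColors_le_and_card_edgeFinset_le hk hk'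
  have hpos : ∀ v ∈ univ, 1 ≤ #(G.heavyColors col v) := fun v _ ↦
    Nat.one_le_iff_ne_zero.2 (card_ne_zero.2 (heavyColors_nonempty (hk v)))
  have hone : ∀ v, #(G.heavyColors col v) = 1 := fun v ↦
    ((sum_eq_sum_iff_of_le hpos).1 (le_antisymm (sum_le_sum hpos) (by simpa using hcard))
      v (mem_univ v)).symm
  choose center hcenter using fun v ↦ card_eq_one.1 (hone v)
  have heavy_iff : ∀ v i, 2 ≤ G.colorDegree col v i ↔ i = center v := fun v i ↦ by
    rw [← mem_singleton, ← hcenter v]; simp [heavyColors]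
  refine (Coloring.mk center fun {u v} huv hc ↦ ?_).colorable
  rcases h.heavy_or_heavy hE huv with hu | hv
  · exact h.not_heavy_and_heavy huv hu (by rw [heavy_iff] at hu ⊢; rw [hu, hc])
  · exact h.not_heavy_and_heavy huv (by rw [heavy_iff] at hv ⊢; rw [hv, hc]) hv

end Counting

/-- Deleting vertices of degree `< t` one at a time reduces to the minimum-degree case. -/
theorem IsStarForestColoring.colorable [Finite V] [Fintype α]
    (h : G.IsStarForestColoring col) {t : ℕ} (hk : Fintype.card α < t)
    (ht : 2 * (Fintype.card α - 1) ≤ t) : G.Colorable t := by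
  classical
  induction hn : Nat.card V using Nat.strong_induction_on generalizing V with
  | _ n ih =>
  have := Fintype.ofFinite V
  by_cases hlow : ∃ v, G.degree v < t
  · obtain ⟨v, hv⟩ := hlow
    refine Colorable.of_induce_compl_singleton hv (ih _ ?_ (h.comap _) rfl)
    exact hn ▸ Finite.card_subtype_lt (p := (· ∈ ({v}ᶜ : Set V))) (x := v) (by simp)
  · simp only [not_exists, not_lt] at hlow
    exact (h.colorable_of_forall_card_lt_degree (fun v ↦ hk.trans_le (hlow v))
      (fun v ↦ ht.trans (hlow v))).mono hk.le

end SimpleGraph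

open SimpleGraph

section MonoCopy

variable {V : Type*} {k : ℕ} {G : SimpleGraph V} {col : Sym2 V → Fin k}

theorem hasMonoCopy_top_three {a b c : V} (hab : G.Adj a b) (hbc : G.Adj b c) (hca : G.Adj c a)
    (h₁ : col s(a, b) = col s(b, c)) (h₂ : col s(b, c) = col s(c, a)) :
    HasMonoCopy G col (⊤ : SimpleGraph (Fin 3)) := by
  have hba : col s(b, a) = col s(b, c) := by rw [Sym2.eq_swap, h₁]
  have hcb : col s(c, b) = col s(b, c) := by rw [Sym2.eq_swap]
  have hac : col s(a, c) = col s(b, c) := by rw [Sym2.eq_swap, h₂]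
  refine ⟨col s(b, c), ⟨![a, b, c], ?_⟩, ?_⟩
  · intro i j hij
    fin_cases i <;> fin_cases j <;> simp_all [hab.ne, hbc.ne, hca.ne, hab.ne', hbc.ne', hca.ne']
  · intro i j hij
    change G.Adj (![a, b, c] i) (![a, b, c] j) ∧ col s(![a, b, c] i, ![a, b, c] j) = _
    fin_cases i <;> fin_cases j <;>
      simp [hab, hbc, hca, hab.symm, hbc.symm, hca.symm, h₁, h₂.symm, hba, hcb, hac] at hij ⊢

theorem hasMonoCopy_pathGraph_four {a b c d : V} (hab : G.Adj a b) (hbc : G.Adj b c)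
    (hcd : G.Adj c d) (hac : a ≠ c) (hbd : b ≠ d) (had : a ≠ d)
    (h₁ : col s(a, b) = col s(b, c)) (h₂ : col s(b, c) = col s(c, d)) :
    HasMonoCopy G col (pathGraph 4) := by
  have hba : col s(b, a) = col s(b, c) := by rw [Sym2.eq_swap, h₁]
  have hcb : col s(c, b) = col s(b, c) := by rw [Sym2.eq_swap]
  have hdc : col s(d, c) = col s(b, c) := by rw [Sym2.eq_swap, h₂]
  refine ⟨col s(b, c), ⟨![a, b, c, d], ?_⟩, ?_⟩
  · intro i j hij
    fin_cases i <;> fin_cases j <;> simp_all [hab.ne, hbc.ne, hcd.ne, hab.ne', hbc.ne', hcd.ne']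
  · intro i j hij
    rw [pathGraph_adj] at hij
    change G.Adj (![a, b, c, d] i) (![a, b, c, d] j) ∧
      col s(![a, b, c, d] i, ![a, b, c, d] j) = _
    fin_cases i <;> fin_cases j <;>
      simp [hab, hbc, hcd, hab.symm, hbc.symm, hcd.symm, h₁, h₂.symm, hba, hcb, hdc] at hij ⊢

end MonoCopy

theorem avoidsFam_F4_iff {V : Type} {k : ℕ} {G : SimpleGraph V} {col : Sym2 V → Fin k} :
    AvoidsFam G col F4 ↔ G.IsStarForestColoring col := by
  constructor
  · intro h x u v y hxu huv hvy hxv huy h₁ h₂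
    by_cases hxy : x = y
    · subst hxy
      exact h _ (Set.mem_insert _ _) (hasMonoCopy_top_three hxu huv hvy h₁ h₂)
    · exact h _ (Set.mem_insert_of_mem _ rfl)
        (hasMonoCopy_pathGraph_four hxu huv hvy hxv huy hxy h₁ h₂)
  · intro h H hH ⟨i, f, hf⟩
    simp only [F4, Set.mem_insert_iff, Set.mem_singleton_iff] at hH
    rcases hH with rfl | rfl
    · have h01 := hf 0 1 (by decide)
      have h12 := hf 1 2 (by decide)
      have h20 := hf 2 0 (by decide)
      exact h h01.1 h12.1 h20.1 (f.injective.ne (by decide)) (f.injective.ne (by decide))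
        (h01.2.trans h12.2.symm) (h12.2.trans h20.2.symm)
    · have h01 := hf 0 1 (by simp [pathGraph_adj])
      have h12 := hf 1 2 (by simp [pathGraph_adj])
      have h23 := hf 2 3 (by simp [pathGraph_adj])
      exact h h01.1 h12.1 h23.1 (f.injective.ne (by decide)) (f.injective.ne (by decide))
        (h01.2.trans h12.2.symm) (h12.2.trans h23.2.symm)

/-- Color `i` is the star from vertex `i` to all larger vertices; the cap at `k - 1` only matters
on the diagonal. -/
def minColoring (k : ℕ) [NeZero k] : Sym2 (Fin (k + 1)) → Fin k :=
  Sym2.lift ⟨fun a b ↦ ⟨min (min a b) (k - 1), by have := NeZero.pos k; omega⟩,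
    fun a b ↦ by simp [min_comm]⟩

theorem isStarForestColoring_minColoring (k : ℕ) [NeZero k] :
    (⊤ : SimpleGraph (Fin (k + 1))).IsStarForestColoring (minColoring k) := by
  intro x u v y hxu huv hvy hxv huy h₁ h₂
  simp only [minColoring, Sym2.lift_mk, Fin.ext_iff, top_adj, ne_eq] at *
  omega

/-- Vertex `a` lies in the pair `a / 2`. Color `i < k - 1` is the union of two stars centered at
the two vertices of pair `i`, and color `k - 1` is the perfect matching formed by the pairs. -/
def pairColor (k a b : ℕ) : ℕ :=
  if a / 2 = b / 2 then k - 1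
  else if a % 2 = b % 2 then min (a / 2) (b / 2) else max (a / 2) (b / 2)

theorem pairColor_comm (k a b : ℕ) : pairColor k a b = pairColor k b a := by
  unfold pairColor; split_ifs <;> omega

theorem pairColor_lt {k a b : ℕ} (ha : a < 2 * k - 2) (hb : b < 2 * k - 2) :
    pairColor k a b < k := by
  unfold pairColor; split_ifs <;> omega

def pairColoring (k : ℕ) : Sym2 (Fin (2 * k - 2)) → Fin k :=
  Sym2.lift ⟨fun a b ↦ ⟨pairColor k a b, pairColor_lt a.isLt b.isLt⟩,
    fun a b ↦ by simp [pairColor_comm k a]⟩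

theorem isStarForestColoring_pairColoring (k : ℕ) :
    (⊤ : SimpleGraph (Fin (2 * k - 2))).IsStarForestColoring (pairColoring k) := by
  intro x u v y hxu huv hvy hxv huy h₁ h₂
  simp only [pairColoring, Sym2.lift_mk, Fin.ext_iff, top_adj, ne_eq] at *
  unfold pairColor at h₁ h₂
  split_ifs at h₁ h₂ <;> omega

theorem cSet_subset_gSet (k : ℕ) (F : GraphFam) : cSet k F ⊆ gSet k F :=
  fun s ⟨col, hcol⟩ ↦ ⟨Fin s, inferInstance, ⊤, col, by simp, hcol⟩

theorem le_of_mem_gSet_F4 {k t s : ℕ} (hk : k < t) (ht : 2 * (k - 1) ≤ t)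
    (hs : s ∈ gSet k F4) : s ≤ t := by
  obtain ⟨V, _, G, col, hχ, hcol⟩ := hs
  have := (avoidsFam_F4_iff.1 hcol).colorable (t := t) (by simpa) (by simpa)
  rw [← chromaticNumber_le_iff_colorable, hχ] at this
  exact_mod_cast this

theorem isGreatest_cSet_F4 {k : ℕ} (hk : 1 ≤ k) :
    IsGreatest (cSet k F4) (max (k + 1) (2 * k - 2)) := by
  refine ⟨?_, fun s hs ↦ le_of_mem_gSet_F4 (by omega) (by omega) (cSet_subset_gSet k F4 hs)⟩
  rcases max_choice (k + 1) (2 * k - 2) with h | h <;> rw [h]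
  · have : NeZero k := ⟨by omega⟩
    exact ⟨minColoring k, avoidsFam_F4_iff.2 (isStarForestColoring_minColoring k)⟩
  · exact ⟨pairColoring k, avoidsFam_F4_iff.2 (isStarForestColoring_pairColoring k)⟩

theorem isGreatest_gSet_F4 {k : ℕ} (hk : 1 ≤ k) :
    IsGreatest (gSet k F4) (max (k + 1) (2 * k - 2)) :=
  ⟨cSet_subset_gSet k F4 (isGreatest_cSet_F4 hk).1,
    fun _ hs ↦ le_of_mem_gSet_F4 (by omega) (by omega) hs⟩

/-- `c₁(F₄) = g₁(F₄) = 2`, `c₂(F₄) = g₂(F₄) = 3`, and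
`c_k(F₄) = g_k(F₄) = 2k - 2` for every `k ≥ 3`; in particular `F₄` is
`k`-nice for every positive integer `k`. -/
theorem stmt0 :
    IsGreatest (cSet 1 F4) 2 ∧ IsGreatest (gSet 1 F4) 2 ∧
    IsGreatest (cSet 2 F4) 3 ∧ IsGreatest (gSet 2 F4) 3 ∧
    ∀ k : ℕ, 3 ≤ k →
      IsGreatest (cSet k F4) (2 * k - 2) ∧ IsGreatest (gSet k F4) (2 * k - 2) := by
  refine ⟨isGreatest_cSet_F4 le_rfl, isGreatest_gSet_F4 le_rfl,
    isGreatest_cSet_F4 one_le_two, isGreatest_gSet_F4 one_le_two, fun k hk ↦ ?_⟩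
  rw [← max_eq_right (show k + 1 ≤ 2 * k - 2 by omega)]
  exact ⟨isGreatest_cSet_F4 (by omega), isGreatest_gSet_F4 (by omega)⟩
end

section
/- For any three generalized triangle factors H_1, H_2, H_3 on the same set of 7 vertices, the union of their edge sets contains at most 17 edges; in particular, it is impossible to cover 18 of the edges of the complete graph K_7 with three generalized triangle factors. -/
/-!
In a generalized triangle factor `H` every vertex has degree smaller than the size of its
component, which is at most `3`, and the vertices lying in components of size `k` are `k` times as
many as these components. On `3m + 1` vertices at most `3m` of them lie in components of size `3`,
and all other vertices have degree at most `1`, so `H` has at most `3m` edges; with exactly `3m`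
edges, `H` consists of triangles covering all vertices but one isolated vertex `z`.

So 18 edges covered by three generalized triangle factors on `7` vertices force three pairwise
edge-disjoint factors `H i` of this kind, with isolated vertices `z i`. A vertex outside the `z i`
has two neighbours in each `H i`, hence is adjacent to all six other vertices. This makes the `z i`
distinct and pairwise non-adjacent, so each `z k` is adjacent to exactly the four vertices of
`W = V \ {z 0, z 1, z 2}`. In `H 0` the neighbour pairs of `z 1` and `z 2` are then complementary in
`W`, and so are the neighbour pairs of `z 2` in `H 0` and in `H 1`. Hence the pair of `z 1` in `H 0`
is the pair of `z 2` in `H 1`, and it is an edge of both `H 0` and `H 1`.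
-/

open SimpleGraph

/-- A generalized triangle factor: every connected component is a subgraph of a
triangle (a triangle, a path with two edges, a single edge, or an isolated
vertex); equivalently, every connected component has at most `3` vertices. -/
def IsGenTriangleFactor {V : Type*} (H : SimpleGraph V) : Prop :=
  ∀ C : H.ConnectedComponent, C.supp.ncard ≤ 3

/-- `G` is the union of the `r` graphs `H 0, …, H (r-1)` on the same vertex set:
its edge set is the union of their edge sets. -/
def IsUnionOf {V : Type*} (G : SimpleGraph V) {r : ℕ} (H : Fin r → SimpleGraph V) : Prop :=
  G = ⨆ i, H i

open Finset Function

namespace SimpleGraph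

variable {V : Type*} (G : SimpleGraph V)

theorem degree_lt_ncard_supp [Fintype V] [DecidableRel G.Adj] (v : V) :
    G.degree v < (G.connectedComponentMk v).supp.ncard := by
  have hsub : insert v (G.neighborSet v) ⊆ (G.connectedComponentMk v).supp := by
    rintro w (rfl | hw)
    · rfl
    · exact (ConnectedComponent.connectedComponentMk_eq_of_adj hw).symm
  calc G.degree v < (insert v (G.neighborSet v)).ncard := by
        rw [Set.ncard_insert_of_notMem (by simp), ← card_neighborFinset_eq_degree,
          ← Set.ncard_coe_finset, coe_neighborFinset]
        exact Nat.lt_succ_self _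
    _ ≤ _ := Set.ncard_le_ncard hsub

theorem dvd_card_filter_ncard_supp_eq [Fintype V] (k : ℕ) :
    k ∣ #{v | (G.connectedComponentMk v).supp.ncard = k} := by
  classical
  rw [card_eq_sum_card_fiberwise (f := G.connectedComponentMk)
    (t := univ.filter fun C : G.ConnectedComponent => C.supp.ncard = k)
    (fun v hv => by simpa using hv)]
  refine dvd_sum fun C hC => ?_
  have hfib : ({v ∈ {v | (G.connectedComponentMk v).supp.ncard = k} |
      G.connectedComponentMk v = C} : Finset V) = C.supp.toFinset := by
    ext v
    simp only [mem_filter, mem_univ, true_and, Set.mem_toFinset, ConnectedComponent.mem_supp_iff]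
    constructor
    · exact fun h => h.2
    · rintro rfl; exact ⟨(mem_filter.1 hC).2, rfl⟩
  rw [hfib, ← Set.ncard_eq_toFinset_card', (mem_filter.1 hC).2]

theorem two_mul_ncard_edgeSet [Fintype V] [DecidableRel G.Adj] :
    2 * G.edgeSet.ncard = ∑ v, G.degree v := by
  rw [sum_degrees_eq_twice_card_edges, ← coe_edgeFinset, Set.ncard_coe_finset]

theorem disjoint_of_le_ncard_edgeSet_sup [Finite V] {G₁ G₂ : SimpleGraph V} {a b : ℕ}
    (h₁ : G₁.edgeSet.ncard ≤ a) (h₂ : G₂.edgeSet.ncard ≤ b)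
    (h : a + b ≤ (G₁ ⊔ G₂).edgeSet.ncard) :
    Disjoint G₁ G₂ ∧ G₁.edgeSet.ncard = a ∧ G₂.edgeSet.ncard = b := by
  rw [edgeSet_sup] at h
  have := Set.ncard_union_le G₁.edgeSet G₂.edgeSet
  refine ⟨disjoint_edgeSet.1 ?_, by omega, by omega⟩
  exact (Set.ncard_union_eq_iff (Set.toFinite _) (Set.toFinite _)).1 (by omega)

end SimpleGraph

/-- A triangle factor of the vertices other than `z`: two neighbours `a, b` of `v ≠ z` form the
component `{v, a, b}`, and `a` has a second neighbour in it, so it is a triangle. -/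
structure IsNearTriangleFactor {V : Type*} (H : SimpleGraph V) (z : V) : Prop where
  isGenTriangleFactor : IsGenTriangleFactor H
  not_adj : ∀ u, ¬ H.Adj z u
  exists_adj_adj : ∀ v, v ≠ z → ∃ a b, a ≠ b ∧ H.Adj v a ∧ H.Adj v b

namespace IsGenTriangleFactor

variable {V : Type*} {H : SimpleGraph V} (hH : IsGenTriangleFactor H)
include hH

theorem supp_eq [Finite V] {v a b : V} (ha : H.Adj v a) (hb : H.Adj v b) (hab : a ≠ b) :
    (H.connectedComponentMk v).supp = {v, a, b} := by
  refine (Set.eq_of_subset_of_ncard_le ?_ ?_).symm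
  · rintro x (rfl | rfl | rfl)
    · rfl
    · exact (ConnectedComponent.connectedComponentMk_eq_of_adj ha).symm
    · exact (ConnectedComponent.connectedComponentMk_eq_of_adj hb).symm
  · rw [Set.ncard_insert_of_notMem (by simp [ha.ne, hb.ne]), Set.ncard_pair hab]
    exact hH _

theorem eq_of_adj [Finite V] {v a b w : V} (ha : H.Adj v a) (hb : H.Adj v b) (hab : a ≠ b)
    (hw : H.Adj a w) (hwv : w ≠ v) : w = b := by
  have hmem : w ∈ (H.connectedComponentMk v).supp :=
    ((ConnectedComponent.connectedComponentMk_eq_of_adj ha).trans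
      (ConnectedComponent.connectedComponentMk_eq_of_adj hw)).symm
  rw [hH.supp_eq ha hb hab] at hmem
  rcases hmem with rfl | rfl | rfl
  · exact absurd rfl hwv
  · exact absurd rfl hw.ne
  · rfl

section Degree

variable [Fintype V] [DecidableRel H.Adj]

theorem degree_le_two (v : V) : H.degree v ≤ 2 := by
  have := H.degree_lt_ncard_supp v
  have := hH (H.connectedComponentMk v)
  omega

theorem sum_degree_le :
    ∑ v, H.degree v ≤ Fintype.card V + #{v | (H.connectedComponentMk v).supp.ncard = 3} := by
  rw [← sum_filter_add_sum_filter_not univ fun v => (H.connectedComponentMk v).supp.ncard = 3]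
  have hin : ∑ v ∈ {v | (H.connectedComponentMk v).supp.ncard = 3}, H.degree v
      ≤ 2 * #{v | (H.connectedComponentMk v).supp.ncard = 3} := by
    refine (sum_le_card_nsmul _ _ 2 fun v _ => hH.degree_le_two v).trans ?_
    rw [smul_eq_mul, mul_comm]
  have hout : ∑ v ∈ {v | ¬(H.connectedComponentMk v).supp.ncard = 3}, H.degree v
      ≤ #{v | ¬(H.connectedComponentMk v).supp.ncard = 3} := by
    refine (sum_le_card_nsmul _ _ 1 fun v hv => ?_).trans (by simp)
    have := H.degree_lt_ncard_supp v
    have := hH (H.connectedComponentMk v)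
    have := (mem_filter.1 hv).2
    omega
  have hcard := card_filter_add_card_filter_not (s := univ)
    fun v => (H.connectedComponentMk v).supp.ncard = 3
  rw [card_univ] at hcard
  omega

end Degree

variable [Fintype V]

theorem ncard_edgeSet_le {m : ℕ} (hV : Fintype.card V = 3 * m + 1) :
    H.edgeSet.ncard ≤ 3 * m := by
  classical
  have hsum := hH.sum_degree_le
  have hdvd := H.dvd_card_filter_ncard_supp_eq 3
  have hle : #{v | (H.connectedComponentMk v).supp.ncard = 3} ≤ Fintype.card V := card_le_univ _
  rw [← H.two_mul_ncard_edgeSet] at hsum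
  omega

theorem exists_isNearTriangleFactor {m : ℕ} (hV : Fintype.card V = 3 * m + 1)
    (hE : H.edgeSet.ncard = 3 * m) : ∃ z, IsNearTriangleFactor H z := by
  classical
  have hsum := hH.sum_degree_le
  have hdvd := H.dvd_card_filter_ncard_supp_eq 3
  rw [← H.two_mul_ncard_edgeSet, hE] at hsum
  set A : Finset V := {v | (H.connectedComponentMk v).supp.ncard = 3} with hAdef
  have hA : #A = 3 * m := by
    have : #A ≤ Fintype.card V := card_le_univ _
    omega
  obtain ⟨z, hz⟩ : ∃ z, Aᶜ = {z} := card_eq_one.1 (by rw [card_compl, hA, hV]; omega)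
  have hmemA : ∀ v, v ≠ z → v ∈ A := fun v hv => by
    by_contra h
    exact hv (mem_singleton.1 (hz ▸ mem_compl.2 h))
  have hdz : H.degree z = 0 := by
    have hzA : z ∉ A := mem_compl.1 (hz ▸ mem_singleton_self z)
    have hzB : (H.connectedComponentMk z).supp.ncard ≠ 2 := fun h2 => by
      set B : Finset V := {v | (H.connectedComponentMk v).supp.ncard = 2}
      have hB : B ⊆ {z} := fun v hv => hz ▸ mem_compl.2 fun hvA => by simp_all [A, B]
      have hzB : z ∈ B := by simpa [B] using h2
      have h1 : #B ≤ 1 := (card_le_card hB).trans (card_singleton z).le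
      have h0 : 0 < #B := card_pos.2 ⟨z, hzB⟩
      have hd : 2 ∣ #B := H.dvd_card_filter_ncard_supp_eq 2
      omega
    have := H.degree_lt_ncard_supp z
    have := hH (H.connectedComponentMk z)
    simp only [hAdef, mem_filter, mem_univ, true_and] at hzA
    omega
  have hdeg : ∀ v ∈ A, H.degree v = 2 := by
    refine (sum_eq_sum_iff_of_le fun v _ => hH.degree_le_two v).1 ?_
    rw [sum_const, smul_eq_mul, hA]
    have := sum_add_sum_compl A fun v => H.degree v
    rw [hz, sum_singleton, hdz, ← H.two_mul_ncard_edgeSet, hE] at this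
    omega
  refine ⟨z, hH, fun u hu => ?_, fun v hv => ?_⟩
  · rw [← card_neighborFinset_eq_degree, card_eq_zero] at hdz
    exact notMem_empty u (hdz ▸ (mem_neighborFinset H z u).2 hu)
  · have h2 := hdeg v (hmemA v hv)
    rw [← card_neighborFinset_eq_degree] at h2
    obtain ⟨a, ha, b, hb, hab⟩ := one_lt_card.1 (h2 ▸ one_lt_two)
    exact ⟨a, b, hab, (mem_neighborFinset H v a).1 ha, (mem_neighborFinset H v b).1 hb⟩

end IsGenTriangleFactor

namespace IsNearTriangleFactor

section

variable {V : Type*} {H : SimpleGraph V} {z : V} (hF : IsNearTriangleFactor H z)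
include hF

theorem adj_of_adj_of_adj [Finite V] {v a b : V} (ha : H.Adj v a) (hb : H.Adj v b) (hab : a ≠ b)
    (haz : a ≠ z) : H.Adj a b := by
  obtain ⟨x, y, hxy, hx, hy⟩ := hF.exists_adj_adj a haz
  have key := fun w (hw : H.Adj a w) (hwv : w ≠ v) =>
    hF.isGenTriangleFactor.eq_of_adj ha hb hab hw hwv
  by_cases hxv : x = v
  · rw [← key y hy (hxv ▸ hxy.symm)]
    exact hy
  · rw [← key x hx hxv]
    exact hx

theorem card_neighborFinset [Fintype V] [DecidableRel H.Adj] {v : V} (hv : v ≠ z) :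
    #(H.neighborFinset v) = 2 := by
  obtain ⟨a, b, hab, ha, hb⟩ := hF.exists_adj_adj v hv
  rw [card_neighborFinset_eq_degree]
  refine le_antisymm (hF.isGenTriangleFactor.degree_le_two v) ?_
  rw [← card_neighborFinset_eq_degree]
  exact one_lt_card.2 ⟨a, by simpa, b, by simpa, hab⟩

end

section Triple

variable {V : Type*} [Fintype V] {H : Fin 3 → SimpleGraph V} {z : Fin 3 → V}
  (hH : ∀ i, IsNearTriangleFactor (H i) (z i)) (hdisj : Pairwise (Disjoint on H))
  (hV : Fintype.card V = 7)
include hH hdisj hV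

theorem exists_adj_of_notMem_range {w u : V} (hw : w ∉ Set.range z) (hu : u ≠ w) :
    ∃ i, (H i).Adj w u := by
  classical
  set N := univ.biUnion fun i => (H i).neighborFinset w
  have hN : #N = 6 := by
    rw [card_biUnion fun i _ j _ hij => disjoint_left.2 fun x hi hj =>
      (hdisj hij).le_bot ⟨(mem_neighborFinset _ _ _).1 hi, (mem_neighborFinset _ _ _).1 hj⟩]
    simp [(hH _).card_neighborFinset fun h => hw ⟨_, h.symm⟩]
  have hcover : insert w N = univ :=
    eq_univ_of_card _ (by rw [card_insert_of_notMem (by simp [N]), hN, hV])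
  have hmem : u ∈ insert w N := hcover ▸ mem_univ u
  simpa [N, hu] using hmem

theorem injective_of_pairwise_disjoint : Injective z := by
  classical
  intro i j hij
  by_contra hne
  have hthird : ∀ i j : Fin 3, i ≠ j → ∃ k, ∀ l, l = i ∨ l = j ∨ l = k := by decide
  obtain ⟨k, hall⟩ := hthird i j hne
  have hsub : univ \ {z i, z k} ⊆ (H k).neighborFinset (z i) := fun w hw => by
    simp only [mem_sdiff, mem_univ, true_and, mem_insert, mem_singleton, not_or] at hw
    have hwz : w ∉ Set.range z := by
      rintro ⟨l, rfl⟩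
      rcases hall l with rfl | rfl | rfl
      exacts [hw.1 rfl, hw.1 hij.symm, hw.2 rfl]
    obtain ⟨l, hl⟩ := exists_adj_of_notMem_range hH hdisj hV hwz (Ne.symm hw.1)
    rcases hall l with rfl | rfl | rfl
    · exact absurd hl.symm ((hH l).not_adj w)
    · exact absurd hl.symm (hij ▸ (hH l).not_adj w)
    · exact (mem_neighborFinset _ _ _).2 hl.symm
  have h5 : 5 ≤ #(univ \ {z i, z k}) := by
    rw [card_sdiff_of_subset (subset_univ _), card_univ, hV]
    have := card_le_two (a := z i) (b := z k)
    omega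
  have := card_le_card hsub
  rw [card_neighborFinset_eq_degree] at this
  have := (hH k).isGenTriangleFactor.degree_le_two (z i)
  omega

theorem card_compl_image_eq_four [DecidableEq V] : #(univ.image z)ᶜ = 4 := by
  rw [card_compl, card_image_of_injective _ (injective_of_pairwise_disjoint hH hdisj hV), hV]
  rfl

theorem not_adj_of_pairwise_disjoint (i j k : Fin 3) : ¬ (H i).Adj (z j) (z k) := by
  classical
  intro hadj
  set M := univ.biUnion fun l => (H l).neighborFinset (z k)
  have hWM : (univ.image z)ᶜ ⊆ M := fun w hw => by
    have hwz : w ∉ Set.range z := by simpa using hw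
    obtain ⟨l, hl⟩ :=
      exists_adj_of_notMem_range hH hdisj hV hwz (u := z k) fun h => hwz ⟨k, h⟩
    exact mem_biUnion.2 ⟨l, mem_univ l, (mem_neighborFinset _ _ _).2 hl.symm⟩
  have hM : #M ≤ 4 := by
    refine card_biUnion_le.trans ?_
    rw [← add_sum_erase _ _ (mem_univ k)]
    have h0 : #((H k).neighborFinset (z k)) = 0 := card_eq_zero.2 <|
      eq_empty_of_forall_notMem fun u hu => (hH k).not_adj u ((mem_neighborFinset _ _ _).1 hu)
    have h2 : ∑ l ∈ univ.erase k, #((H l).neighborFinset (z k)) ≤ #(univ.erase k) • 2 :=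
      sum_le_card_nsmul _ _ _ fun l _ => by
        rw [card_neighborFinset_eq_degree]
        exact (hH l).isGenTriangleFactor.degree_le_two _
    rw [card_erase_of_mem (mem_univ k), card_univ, Fintype.card_fin, smul_eq_mul] at h2
    omega
  have hMW : (univ.image z)ᶜ = M :=
    eq_of_subset_of_card_le hWM (by rw [card_compl_image_eq_four hH hdisj hV]; exact hM)
  have hzj : z j ∈ M := mem_biUnion.2 ⟨i, mem_univ i, (mem_neighborFinset _ _ _).2 hadj.symm⟩
  rw [← hMW] at hzj
  simp at hzj

end Triple

theorem not_pairwise_disjoint {V : Type*} [Fintype V]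
    {H : Fin 3 → SimpleGraph V} {z : Fin 3 → V} (hH : ∀ i, IsNearTriangleFactor (H i) (z i))
    (hV : Fintype.card V = 7) : ¬ Pairwise (Disjoint on H) := by
  classical
  intro hdisj
  have hinj := injective_of_pairwise_disjoint hH hdisj hV
  have hnadj := not_adj_of_pairwise_disjoint hH hdisj hV
  set W := (univ.image z)ᶜ
  have hsubW : ∀ i j, (H i).neighborFinset (z j) ⊆ W := fun i j u hu => by
    simp only [W, mem_compl, mem_image, mem_univ, true_and, not_exists]
    rintro l rfl
    exact hnadj i j l ((mem_neighborFinset _ _ _).1 hu)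
  have hcard : ∀ i j, i ≠ j → #((H i).neighborFinset (z j)) = 2 := fun i j hij =>
    (hH i).card_neighborFinset (hinj.ne hij.symm)
  have hsep₁ : Disjoint ((H 0).neighborFinset (z 2)) ((H 0).neighborFinset (z 1)) :=
    disjoint_left.2 fun x h2 h1 => hnadj 0 1 2 <|
      (hH 0).adj_of_adj_of_adj ((mem_neighborFinset _ _ _).1 h1).symm
        ((mem_neighborFinset _ _ _).1 h2).symm (hinj.ne (by decide)) (hinj.ne (by decide))
  have hsep₂ : Disjoint ((H 0).neighborFinset (z 2)) ((H 1).neighborFinset (z 2)) :=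
    disjoint_left.2 fun x h0 h1 => (hdisj (by decide : (0 : Fin 3) ≠ 1)).le_bot
      ⟨(mem_neighborFinset _ _ _).1 h0, (mem_neighborFinset _ _ _).1 h1⟩
  have hrest : #(W \ (H 0).neighborFinset (z 2)) = 2 := by
    rw [card_sdiff_of_subset (hsubW 0 2), card_compl_image_eq_four hH hdisj hV,
      hcard 0 2 (by decide)]
  have heq : ∀ i j, i ≠ j →
      Disjoint ((H 0).neighborFinset (z 2)) ((H i).neighborFinset (z j)) →
      (H i).neighborFinset (z j) = W \ (H 0).neighborFinset (z 2) := fun i j hij hd =>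
    eq_of_subset_of_card_le (subset_sdiff.2 ⟨hsubW i j, hd.symm⟩) (by rw [hrest, hcard i j hij])
  have h01 : (H 0).neighborFinset (z 1) = (H 1).neighborFinset (z 2) :=
    (heq 0 1 (by decide) hsep₁).trans (heq 1 2 (by decide) hsep₂).symm
  obtain ⟨a, b, hab, ha, hb⟩ := (hH 1).exists_adj_adj (z 2) (hinj.ne (by decide))
  have ha' : (H 0).Adj (z 1) a := by
    rw [← mem_neighborFinset, h01, mem_neighborFinset]; exact ha
  have hb' : (H 0).Adj (z 1) b := by
    rw [← mem_neighborFinset, h01, mem_neighborFinset]; exact hb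
  have haz : ∀ i, a ≠ z i := fun i h => hnadj 1 2 i (h ▸ ha)
  exact (hdisj (by decide : (0 : Fin 3) ≠ 1)).le_bot
    ⟨(hH 0).adj_of_adj_of_adj ha' hb' hab (haz 0), (hH 1).adj_of_adj_of_adj ha hb hab (haz 1)⟩

end IsNearTriangleFactor

/-- The union of any three generalized triangle factors on `7` vertices has at
most `17` edges; in particular one cannot cover `18` of the edges of `K₇` by
three generalized triangle factors. -/
theorem stmt11 (H₁ H₂ H₃ : SimpleGraph (Fin 7))
    (h₁ : IsGenTriangleFactor H₁) (h₂ : IsGenTriangleFactor H₂)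
    (h₃ : IsGenTriangleFactor H₃) :
    (H₁ ⊔ H₂ ⊔ H₃).edgeSet.ncard ≤ 17 := by
  classical
  by_contra! h
  have hcard : Fintype.card (Fin 7) = 3 * 2 + 1 := rfl
  have e₁ := h₁.ncard_edgeSet_le hcard
  have e₂ := h₂.ncard_edgeSet_le hcard
  have e₁₂ : (H₁ ⊔ H₂).edgeSet.ncard ≤ 12 := by
    rw [edgeSet_sup]
    exact (Set.ncard_union_le _ _).trans (by omega)
  obtain ⟨d₁₂₃, e₁₂', e₃'⟩ :=
    disjoint_of_le_ncard_edgeSet_sup e₁₂ (h₃.ncard_edgeSet_le hcard) h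
  obtain ⟨d₁₂, e₁', e₂'⟩ := disjoint_of_le_ncard_edgeSet_sup e₁ e₂ e₁₂'.ge
  obtain ⟨d₁₃, d₂₃⟩ := disjoint_sup_left.1 d₁₂₃
  obtain ⟨z₁, hz₁⟩ := h₁.exists_isNearTriangleFactor hcard e₁'
  obtain ⟨z₂, hz₂⟩ := h₂.exists_isNearTriangleFactor hcard e₂'
  obtain ⟨z₃, hz₃⟩ := h₃.exists_isNearTriangleFactor hcard e₃'
  refine IsNearTriangleFactor.not_pairwise_disjoint
    (H := ![H₁, H₂, H₃]) (z := ![z₁, z₂, z₃]) (fun i => by fin_cases i <;> assumption)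
    (Fintype.card_fin 7) fun i j hij => ?_
  fin_cases i <;> fin_cases j
  all_goals first | exact absurd rfl hij | assumption | exact Disjoint.symm ‹_›
end

section
/- Let G = (V, E) be a connected graph that is a union of triangle factors on the same vertex set V, let k ∈ {1, 2}, let A ⊆ V satisfy |A| ≡ k (mod 3), and let B = A ∪ N_G(A), where N_G(A) is the external neighborhood of A in G. Then (a) |N_G(A)| ≥ 3 − k, and (b) if |N_G(A)| = 3 − k, then B = V. -/
open SimpleGraph

/-- A triangle factor: every connected component is a triangle; equivalently,
every connected component has exactly `3` vertices and any two distinct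
vertices in the same component are adjacent. -/
def IsTriangleFactor {V : Type*} (H : SimpleGraph V) : Prop :=
  (∀ C : H.ConnectedComponent, C.supp.ncard = 3) ∧
  ∀ v w : V, H.Reachable v w → v ≠ w → H.Adj v w

/-- The external neighborhood of a set `A` of vertices:
all vertices outside `A` having a neighbor in `A`. -/
def extNbhd {V : Type*} (G : SimpleGraph V) (A : Set V) : Set V :=
  {v | v ∉ A ∧ ∃ u ∈ A, G.Adj u v}

lemma mem_extNbhd_of_reachable {V : Type*} {H : SimpleGraph V} (hH : IsTriangleFactor H)
    {A : Set V} {u v : V} (hu : u ∈ A) (hv : v ∉ A) (h : H.Reachable u v) :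
    v ∈ extNbhd H A :=
  ⟨hv, u, hu, hH.2 u v h (by rintro rfl; exact hv hu)⟩

lemma ncard_fiber_sum {V : Type} [Fintype V] (H : SimpleGraph V)
    [Fintype H.ConnectedComponent] (A : Set V) :
    A.ncard = ∑ c : H.ConnectedComponent, (A ∩ c.supp).ncard := by
  classical
  have h : A.toFinset.card
      = ∑ c : H.ConnectedComponent,
        (A.toFinset.filter fun v => H.connectedComponentMk v = c).card :=
    Finset.card_eq_sum_card_fiberwise (fun x _ => Finset.mem_univ _)
  rw [Set.ncard_eq_toFinset_card', h]
  refine Finset.sum_congr rfl fun c _ => ?_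
  rw [Set.ncard_eq_toFinset_card']
  congr 1
  ext v
  simp [Set.mem_toFinset, ConnectedComponent.mem_supp_iff]

/-- Key counting lemma for a single triangle factor. -/
lemma triangleFactor_extNbhd_lb {V : Type} [Fintype V] {H : SimpleGraph V}
    (hH : IsTriangleFactor H) {A : Set V} {k : ℕ} (hk : k = 1 ∨ k = 2)
    (hA : A.ncard % 3 = k) : 3 - k ≤ (extNbhd H A).ncard := by
  classical
  haveI : Fintype H.ConnectedComponent := Fintype.ofFinite _
  have hsum := ncard_fiber_sum H A
  set P : H.ConnectedComponent → ℕ := fun c => (A ∩ c.supp).ncard with hP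
  have hPle : ∀ c, P c ≤ 3 := fun c => by
    rw [← hH.1 c]
    exact Set.ncard_le_ncard Set.inter_subset_right (Set.toFinite _)
  have hk0 : k ≠ 0 := by rcases hk with rfl | rfl <;> simp
  -- there is a partial component
  have hex : ∃ c, P c % 3 ≠ 0 := by
    by_contra hcon
    push_neg at hcon
    have : 3 ∣ ∑ c : H.ConnectedComponent, P c :=
      Finset.dvd_sum fun c _ => Nat.dvd_of_mod_eq_zero (hcon c)
    rw [← hsum] at this
    omega
  obtain ⟨c1, hc1⟩ := hex
  -- facts about partial components
  have hAfin : ∀ c : H.ConnectedComponent, (A ∩ c.supp).Finite := fun _ => Set.toFinite _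
  have hdiff : ∀ c : H.ConnectedComponent, (c.supp \ A).ncard = 3 - P c := by
    intro c
    have h1 : c.supp \ A = c.supp \ (A ∩ c.supp) := (Set.diff_inter_self_eq_diff).symm
    rw [h1, Set.ncard_diff Set.inter_subset_right (Set.toFinite _), hH.1 c]
  have hsub : ∀ c : H.ConnectedComponent, (A ∩ c.supp).Nonempty →
      c.supp \ A ⊆ extNbhd H A := by
    rintro c ⟨u, huA, huc⟩ v ⟨hvc, hvA⟩
    refine mem_extNbhd_of_reachable hH huA hvA ?_
    have h1 : H.connectedComponentMk u = c := huc
    have h2 : H.connectedComponentMk v = c := hvc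
    exact ConnectedComponent.exact (h1.trans h2.symm)
  have hpart : ∀ c : H.ConnectedComponent, P c % 3 ≠ 0 → P c = 1 ∨ P c = 2 := by
    intro c hc
    have := hPle c
    omega
  have hne1 : (A ∩ c1.supp).Nonempty := by
    rw [← Set.ncard_pos (hAfin c1)]
    show 0 < P c1
    have := hpart c1 hc1
    omega
  have hNfin : (extNbhd H A).Finite := Set.toFinite _
  rcases hk with rfl | rfl
  · -- k = 1 : need 2 ≤ ncard
    by_cases hex2 : ∃ c2, c2 ≠ c1 ∧ P c2 % 3 ≠ 0
    · obtain ⟨c2, hc2ne, hc2⟩ := hex2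
      have hne2 : (A ∩ c2.supp).Nonempty := by
        rw [← Set.ncard_pos (hAfin c2)]
        show 0 < P c2
        have := hpart c2 hc2
        omega
      have hd1 : (c1.supp \ A).Nonempty := by
        rw [← Set.ncard_pos (Set.toFinite _), hdiff c1]
        have := hpart c1 hc1; omega
      have hd2 : (c2.supp \ A).Nonempty := by
        rw [← Set.ncard_pos (Set.toFinite _), hdiff c2]
        have := hpart c2 hc2; omega
      obtain ⟨v1, hv1⟩ := hd1
      obtain ⟨v2, hv2⟩ := hd2
      have hne : v1 ≠ v2 := by
        rintro rfl
        have h1 : H.connectedComponentMk v1 = c1 := hv1.1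
        have h2 : H.connectedComponentMk v1 = c2 := hv2.1
        exact hc2ne (h2.symm.trans h1)
      have h2lt : 1 < (extNbhd H A).ncard := by
        rw [Set.one_lt_ncard hNfin]
        exact ⟨v1, hsub c1 hne1 hv1, v2, hsub c2 hne2 hv2, hne⟩
      omega
    · push_neg at hex2
      -- all other components contribute a multiple of 3, so P c1 ≡ 1 mod 3
      have hdvd : 3 ∣ ∑ c ∈ Finset.univ.erase c1, P c :=
        Finset.dvd_sum fun c hc =>
          Nat.dvd_of_mod_eq_zero (hex2 c (Finset.mem_erase.1 hc).1)
      have hadd : ∑ c : H.ConnectedComponent, P c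
          = P c1 + ∑ c ∈ Finset.univ.erase c1, P c :=
        (Finset.add_sum_erase _ _ (Finset.mem_univ c1)).symm
      have hP1 : P c1 = 1 := by
        have hle := hPle c1
        rw [hsum, hadd] at hA
        omega
      have : (c1.supp \ A).ncard = 2 := by rw [hdiff c1, hP1]
      calc 3 - 1 = (c1.supp \ A).ncard := by omega
        _ ≤ (extNbhd H A).ncard := Set.ncard_le_ncard (hsub c1 hne1) hNfin
  · -- k = 2 : need 1 ≤ ncard, i.e. nonempty
    have hd1 : (c1.supp \ A).Nonempty := by
      rw [← Set.ncard_pos (Set.toFinite _), hdiff c1]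
      have := hpart c1 hc1; omega
    obtain ⟨v1, hv1⟩ := hd1
    have : 0 < (extNbhd H A).ncard := by
      rw [Set.ncard_pos hNfin]
      exact ⟨v1, hsub c1 hne1 hv1⟩
    omega

/-- Let `G` be a connected graph which is a union of triangle factors on the
same vertex set, let `k ∈ {1, 2}`, let `A` be a set of vertices with
`|A| ≡ k (mod 3)`, and let `B = A ∪ N_G(A)`.  Then `|N_G(A)| ≥ 3 - k`, and if
`|N_G(A)| = 3 - k` then `B` is all of the vertex set. -/
theorem stmt13 {V : Type} [Fintype V] (G : SimpleGraph V) (hconn : G.Connected)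
    (r : ℕ) (hr : 0 < r) (H : Fin r → SimpleGraph V)
    (hH : ∀ i, IsTriangleFactor (H i)) (hG : G = ⨆ i, H i)
    (k : ℕ) (hk : k = 1 ∨ k = 2) (A : Set V) (hA : A.ncard % 3 = k) :
    3 - k ≤ (extNbhd G A).ncard ∧
    ((extNbhd G A).ncard = 3 - k → A ∪ extNbhd G A = Set.univ) := by
  have hle : ∀ i, H i ≤ G := fun i => hG ▸ le_iSup H i
  have hsubN : ∀ i, extNbhd (H i) A ⊆ extNbhd G A := by
    rintro i v ⟨hv, u, hu, hadj⟩
    exact ⟨hv, u, hu, hle i hadj⟩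
  have hNfin : (extNbhd G A).Finite := Set.toFinite _
  have i0 : Fin r := ⟨0, hr⟩
  have part1 : 3 - k ≤ (extNbhd G A).ncard :=
    le_trans (triangleFactor_extNbhd_lb (hH i0) hk hA)
      (Set.ncard_le_ncard (hsubN i0) hNfin)
  refine ⟨part1, fun hN => ?_⟩
  have heq : ∀ i, extNbhd (H i) A = extNbhd G A := fun i =>
    Set.eq_of_subset_of_ncard_le (hsubN i)
      (by rw [hN]; exact triangleFactor_extNbhd_lb (hH i) hk hA) hNfin
  -- the set B = A ∪ N(A) is closed under adjacency
  have hcl : ∀ u v : V, G.Adj u v → u ∈ A ∪ extNbhd G A → v ∈ A ∪ extNbhd G A := by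
    intro u v hadj hu
    by_cases hv : v ∈ A
    · exact Or.inl hv
    rcases hu with hu | hu
    · exact Or.inr ⟨hv, u, hu, hadj⟩
    · rw [hG, iSup_adj] at hadj
      obtain ⟨i, hi⟩ := hadj
      rw [← heq i] at hu
      obtain ⟨hunA, a, haA, hadj'⟩ := hu
      have hreach : (H i).Reachable a v := hadj'.reachable.trans hi.reachable
      rw [← heq i]
      exact Or.inr (mem_extNbhd_of_reachable (hH i) haA hv hreach)
  have hAne : A.Nonempty := by
    rcases A.eq_empty_or_nonempty with rfl | h
    · rcases hk with rfl | rfl <;> simp at hA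
    · exact h
  obtain ⟨a, ha⟩ := hAne
  have hwalk : ∀ {x y : V} (w : G.Walk x y),
      x ∈ A ∪ extNbhd G A → y ∈ A ∪ extNbhd G A := by
    intro x y w
    induction w with
    | nil => exact id
    | cons h _ ih => exact fun hx => ih (hcl _ _ h hx)
  rw [Set.eq_univ_iff_forall]
  intro v
  obtain ⟨w⟩ := hconn.preconnected a v
  exact hwalk w (Or.inl ha)
end

section
/- Let n be a positive integer and let G be a graph on n + 1 vertices with chromatic number n. Then G contains the complete graph K_n as a subgraph. -/
/-!
If `G` has no `K_n`, then for every vertex `c` the `n` remaining vertices span a non-edge, so no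
single vertex meets all non-edges. The non-edges therefore contain two disjoint pairs or a
triangle, and identifying the colours within them turns the trivial `(n + 1)`-colouring into an
`(n - 1)`-colouring, contradicting `χ(G) = n`.
-/

open SimpleGraph

namespace SimpleGraph

variable {V : Type} {G : SimpleGraph V}

section Colorable

variable [Fintype V] [DecidableEq V]

theorem colorable_card_sub_card_of_disjoint_range {f : V → V}
    (hf : ∀ x y, G.Adj x y → f x ≠ f y) {s : Finset V} (hs : Disjoint (Set.range f) s) :
    G.Colorable (Fintype.card V - s.card) := by
  have hcol : G.Colorable (Fintype.card (Set.range f)) :=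
    (Coloring.mk (Set.rangeFactorization f)
      fun hxy hfxy => hf _ _ hxy (congrArg Subtype.val hfxy)).colorable
  refine hcol.mono ?_
  rw [← Set.toFinset_card, ← Finset.card_univ_sdiff]
  exact Finset.card_le_card fun x hx => by
    simp only [Set.mem_toFinset] at hx
    simpa using Set.disjoint_left.mp hs hx

theorem colorable_card_sub_two_of_disjoint_compl_adj {u v a b : V}
    (huv : Gᶜ.Adj u v) (hab : Gᶜ.Adj a b) (hua : u ≠ a) (hub : u ≠ b) (hva : v ≠ a)
    (hvb : v ≠ b) : G.Colorable (Fintype.card V - 2) := by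
  rw [compl_adj] at huv hab
  have hf : ∀ x y, G.Adj x y →
      (if x = v then u else if x = b then a else x) ≠
        (if y = v then u else if y = b then a else y) := by
    intro x y hxy
    have := hxy.symm
    grind [G.ne_of_adj]
  simpa [hvb] using colorable_card_sub_card_of_disjoint_range hf (s := {v, b}) (by
    rw [Set.disjoint_left]
    rintro _ ⟨x, rfl⟩
    grind)

theorem colorable_card_sub_two_of_compl_adj_triangle {p q r : V}
    (hpq : Gᶜ.Adj p q) (hpr : Gᶜ.Adj p r) (hqr : Gᶜ.Adj q r) :
    G.Colorable (Fintype.card V - 2) := by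
  rw [compl_adj] at hpq hpr hqr
  have hf : ∀ x y, G.Adj x y →
      (if x = q ∨ x = r then p else x) ≠ (if y = q ∨ y = r then p else y) := by
    intro x y hxy
    have := hxy.symm
    grind [G.ne_of_adj]
  simpa [hqr.1] using colorable_card_sub_card_of_disjoint_range hf (s := {q, r}) (by
    rw [Set.disjoint_left]
    rintro _ ⟨x, rfl⟩
    grind)

end Colorable

def HasTwoDisjointEdges (H : SimpleGraph V) : Prop :=
  ∃ u v a b, H.Adj u v ∧ H.Adj a b ∧ u ≠ a ∧ u ≠ b ∧ v ≠ a ∧ v ≠ b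

theorem exists_adj_ne_or_hasTwoDisjointEdges {H : SimpleGraph V} {u v a b : V}
    (huv : H.Adj u v) (hab : H.Adj a b) (hau : a ≠ u) (hbu : b ≠ u) :
    (∃ w, H.Adj v w ∧ w ≠ u) ∨ H.HasTwoDisjointEdges := by
  by_cases hav : a = v
  · exact .inl ⟨b, hav ▸ hab, hbu⟩
  by_cases hbv : b = v
  · exact .inl ⟨a, hbv ▸ hab.symm, hau⟩
  exact .inr ⟨u, v, a, b, huv, hab, hau.symm, hbu.symm, Ne.symm hav, Ne.symm hbv⟩

theorem hasTwoDisjointEdges_or_exists_triangle [Nonempty V] {H : SimpleGraph V}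
    (h : ∀ c, ∃ a b, H.Adj a b ∧ a ≠ c ∧ b ≠ c) :
    H.HasTwoDisjointEdges ∨ ∃ p q r, H.Adj p q ∧ H.Adj p r ∧ H.Adj q r := by
  obtain ⟨u, v, huv, -, -⟩ := h (Classical.arbitrary V)
  obtain ⟨a, b, hab, hau, hbu⟩ := h u
  obtain ⟨x, y, hxy, hxv, hyv⟩ := h v
  rcases exists_adj_ne_or_hasTwoDisjointEdges huv hab hau hbu with ⟨w, hvw, hwu⟩ | hdisj
  · rcases exists_adj_ne_or_hasTwoDisjointEdges huv.symm hxy hxv hyv with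
      ⟨w', huw', hw'v⟩ | hdisj
    · by_cases hww' : w = w'
      · subst hww'
        exact .inr ⟨u, v, w, huv, huw', hvw⟩
      · exact .inl ⟨v, w, u, w', hvw, huw', huv.ne.symm, Ne.symm hw'v, hwu, hww'⟩
    · exact .inl hdisj
  · exact .inl hdisj

theorem exists_compl_adj_ne_of_cliqueFree [Fintype V] {n : ℕ}
    (hcard : Fintype.card V = n + 1) (hG : G.CliqueFree n) (c : V) :
    ∃ a b, Gᶜ.Adj a b ∧ a ≠ c ∧ b ≠ c := by
  classical
  have hnot : ¬G.IsClique (Finset.univ.erase c : Set V) := fun hclique =>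
    hG _ ⟨hclique, by simp [Finset.card_erase_of_mem, hcard]⟩
  simp only [IsClique, Set.Pairwise, Finset.coe_erase, Finset.coe_univ] at hnot
  push Not at hnot
  obtain ⟨a, ha, b, hb, hab, hnadj⟩ := hnot
  exact ⟨a, b, (compl_adj G a b).mpr ⟨hab, hnadj⟩, ha.2, hb.2⟩

end SimpleGraph

theorem stmt14_general {V : Type} [Fintype V] (n : ℕ)
    (hcard : Fintype.card V = n + 1) (G : SimpleGraph V)
    (hchi : G.chromaticNumber = (n : ℕ∞)) :
    ∃ s : Finset V, G.IsNClique n s := by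
  classical
  by_contra! hfree
  replace hfree : G.CliqueFree n := hfree
  have hn : n ≠ 0 := by
    rintro rfl
    exact hfree ∅ (isNClique_empty.mpr rfl)
  have : Nonempty V := Fintype.card_pos_iff.mp (by omega)
  have hcol : G.Colorable (Fintype.card V - 2) := by
    rcases hasTwoDisjointEdges_or_exists_triangle
        (exists_compl_adj_ne_of_cliqueFree hcard hfree) with
      ⟨u, v, a, b, huv, hab, hua, hub, hva, hvb⟩ | ⟨p, q, r, hpq, hpr, hqr⟩
    · exact colorable_card_sub_two_of_disjoint_compl_adj huv hab hua hub hva hvb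
    · exact colorable_card_sub_two_of_compl_adj_triangle hpq hpr hqr
  have hle := hcol.chromaticNumber_le
  rw [hchi, hcard] at hle
  norm_cast at hle
  omega

/-- Every graph on `n + 1` vertices with chromatic number `n` contains the
complete graph `K_n` as a subgraph, i.e. it has a clique on `n` vertices. -/
theorem stmt14 {V : Type} [Fintype V] (n : ℕ) (hn : 0 < n)
    (hcard : Fintype.card V = n + 1) (G : SimpleGraph V)
    (hchi : G.chromaticNumber = (n : ℕ∞)) :
    ∃ s : Finset V, G.IsNClique n s :=
  stmt14_general n hcard G hchi
end

section
/- Let k ≥ 2 be an integer and let G be a graph that is the union of k + 1 galaxies on the same vertex set. Then χ(G) ≤ 2k. -/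
/-!
Record each galaxy by the map sending a vertex to the center of its star. A vertex that is a leaf
in all `k + 1` galaxies has at most `k + 1 < 2k` neighbours. So if every vertex of a vertex set `S`
has at least `2k` neighbours in `S`, each is a leaf (with center in `S`) in at most `k` galaxies;
since every edge has a leaf end, double counting forces exactly `k`, and colouring each vertex by
its unique remaining galaxy is proper. Otherwise some vertex of `S` has fewer than `2k` neighbours
in `S`, and induction on `S` colours it greedily last.
-/

open SimpleGraph

/-- A galaxy: every connected component is a star, i.e. each component has a
center vertex incident to all of the component's edges. -/
def IsGalaxy {V : Type*} (H : SimpleGraph V) : Prop :=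
  ∀ C : H.ConnectedComponent, ∃ c ∈ C.supp,
    ∀ u v : V, H.Adj u v → u ∈ C.supp → (u = c ∨ v = c)

open Finset

variable {V : Type*}

namespace SimpleGraph

variable (G : SimpleGraph V) {α : Type*}

def IsProperOn (S : Finset V) (f : V → α) : Prop :=
  ∀ u ∈ S, ∀ v ∈ S, G.Adj u v → f u ≠ f v

variable {G} [DecidableRel G.Adj]

theorem IsProperOn.exists_extend [Fintype α] [DecidableEq V] {S : Finset V} {v : V}
    {f : V → α} (hf : G.IsProperOn (S.erase v) f)
    (hv : #{w ∈ S | G.Adj v w} < Fintype.card α) :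
    ∃ g : V → α, G.IsProperOn S g := by
  classical
  obtain ⟨a, ha⟩ : ∃ a, a ∉ ({w ∈ S | G.Adj v w} : Finset V).image f := by
    by_contra! h
    have := card_le_card (fun a _ => h a : (univ : Finset α) ⊆ _)
    exact (this.trans card_image_le).not_gt (by simpa using hv)
  have hfree : ∀ w ∈ S, G.Adj v w → f w ≠ a := fun w hw hvw hwa =>
    ha (mem_image.2 ⟨w, mem_filter.2 ⟨hw, hvw⟩, hwa⟩)
  refine ⟨Function.update f v a, fun u hu w hw huw => ?_⟩
  rcases eq_or_ne u v with rfl | hu'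
  · simpa [Function.update_of_ne huw.ne'] using (hfree w hw huw).symm
  rcases eq_or_ne w v with rfl | hw'
  · simpa [Function.update_of_ne hu'] using hfree u hu huw.symm
  simpa [Function.update_of_ne hu', Function.update_of_ne hw'] using
    hf u (mem_erase.2 ⟨hu', hu⟩) w (mem_erase.2 ⟨hw', hw⟩) huw

theorem exists_isProperOn_of_forall_minDegree [Fintype α] [DecidableEq V]
    (h : ∀ S : Finset V, (∀ v ∈ S, Fintype.card α ≤ #{w ∈ S | G.Adj v w}) →
      ∃ f : V → α, G.IsProperOn S f)
    (S : Finset V) : ∃ f : V → α, G.IsProperOn S f := by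
  induction S using Finset.strongInduction with
  | H S ih =>
    by_cases hlow : ∃ v ∈ S, #{w ∈ S | G.Adj v w} < Fintype.card α
    · obtain ⟨v, hv, hdeg⟩ := hlow
      obtain ⟨f, hf⟩ := ih (S.erase v) (erase_ssubset hv)
      exact hf.exists_extend hdeg
    · push Not at hlow
      exact h S hlow

end SimpleGraph

/-- Each vertex `u` with `p u ≠ u` is a leaf attached to the center `p u`, a fixed point of `p`. -/
def starForest (p : V → V) : SimpleGraph V :=
  SimpleGraph.fromRel fun u v => p u = v ∧ p v = v

theorem starForest_adj {p : V → V} {u v : V} :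
    (starForest p).Adj u v ↔ u ≠ v ∧ (p u = v ∧ p v = v ∨ p v = u ∧ p u = u) :=
  SimpleGraph.fromRel_adj _ u v

theorem IsGalaxy.exists_le_starForest {H : SimpleGraph V} (hH : IsGalaxy H) :
    ∃ p : V → V, H ≤ starForest p := by
  choose c hc using hH
  refine ⟨fun v => c (H.connectedComponentMk v), fun u v huv => ?_⟩
  have hsame : H.connectedComponentMk v = H.connectedComponentMk u :=
    (ConnectedComponent.sound huv.reachable).symm
  refine starForest_adj.2 ⟨huv.ne, ?_⟩
  simp only [hsame]
  rcases (hc _).2 u v huv rfl with h | h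
  · exact Or.inr ⟨h.symm, h.symm⟩
  · exact Or.inl ⟨h.symm, h.symm⟩

section StarForestCover

variable {ι : Type*} [Fintype ι] [DecidableEq V] {G : SimpleGraph V}
  {p : ι → V → V} {S : Finset V}

def leafIndices (p : ι → V → V) (S : Finset V) (v : V) : Finset ι :=
  {i | p i v ≠ v ∧ p i v ∈ S}

theorem mem_leafIndices {v : V} {i : ι} : i ∈ leafIndices p S v ↔ p i v ≠ v ∧ p i v ∈ S := by
  simp [leafIndices]

theorem card_filter_adj_le_of_leafIndices_eq_univ [DecidableRel G.Adj]
    (hG : G ≤ ⨆ i, starForest (p i)) {v : V} (hv : leafIndices p S v = univ) :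
    #{w ∈ S | G.Adj v w} ≤ Fintype.card ι := by
  calc #{w ∈ S | G.Adj v w} ≤ #(univ.image fun i => p i v) := by
        refine card_le_card fun w hw => ?_
        obtain ⟨-, hvw⟩ := mem_filter.1 hw
        obtain ⟨i, hi⟩ := SimpleGraph.iSup_adj.1 (hG hvw)
        obtain ⟨-, ⟨hiv, -⟩ | ⟨-, hvv⟩⟩ := starForest_adj.1 hi
        · exact mem_image.2 ⟨i, mem_univ i, hiv⟩
        · exact absurd hvv (mem_leafIndices.1 (hv ▸ mem_univ i)).1
    _ ≤ Fintype.card ι := card_image_le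

/-- Every edge of `G` inside `S` is hit by the map `(v, i) ↦ (v, p i v)` on pairs with
`i ∈ leafIndices p S v`, up to orientation. -/
theorem sum_card_filter_adj_le [DecidableRel G.Adj] (hG : G ≤ ⨆ i, starForest (p i)) :
    ∑ v ∈ S, #{w ∈ S | G.Adj v w} ≤ 2 * ∑ v ∈ S, #(leafIndices p S v) := by
  set L := S.sigma fun v => leafIndices p S v
  set A := L.image fun x => (⟨x.1, p x.2 x.1⟩ : Σ _ : V, V)
  have hcover : (S.sigma fun v => ({w ∈ S | G.Adj v w} : Finset V)) ⊆
      A ∪ A.image fun x => ⟨x.2, x.1⟩ := by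
    rintro ⟨v, w⟩ hvw
    simp only [mem_sigma, mem_filter] at hvw
    obtain ⟨hv, hw, hadj⟩ := hvw
    obtain ⟨i, hi⟩ := SimpleGraph.iSup_adj.1 (hG hadj)
    obtain ⟨hne, ⟨hiv, -⟩ | ⟨hiw, -⟩⟩ := starForest_adj.1 hi
    · refine mem_union_left _ (mem_image.2 ⟨⟨v, i⟩, ?_, by simp [hiv]⟩)
      exact mem_sigma.2 ⟨hv, mem_leafIndices.2 ⟨hiv ▸ hne.symm, hiv ▸ hw⟩⟩
    · refine mem_union_right _ (mem_image.2 ⟨⟨w, v⟩, ?_, rfl⟩)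
      refine mem_image.2 ⟨⟨w, i⟩, ?_, by simp [hiw]⟩
      exact mem_sigma.2 ⟨hw, mem_leafIndices.2 ⟨hiw ▸ hne, hiw ▸ hv⟩⟩
  calc ∑ v ∈ S, #{w ∈ S | G.Adj v w} = #(S.sigma fun v => ({w ∈ S | G.Adj v w} : Finset V)) :=
        (card_sigma _ _).symm
    _ ≤ #A + #A := (card_le_card hcover).trans ((card_union_le _ _).trans
        (Nat.add_le_add_left card_image_le _))
    _ ≤ 2 * #L := by have : #A ≤ #L := card_image_le; omega
    _ = 2 * ∑ v ∈ S, #(leafIndices p S v) := by rw [card_sigma]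

theorem card_leafIndices_eq [DecidableRel G.Adj] {k : ℕ} (hk : 2 ≤ k)
    (hι : Fintype.card ι = k + 1) (hG : G ≤ ⨆ i, starForest (p i))
    (hdeg : ∀ v ∈ S, 2 * k ≤ #{w ∈ S | G.Adj v w}) :
    ∀ v ∈ S, #(leafIndices p S v) = k := by
  have hle : ∀ v ∈ S, #(leafIndices p S v) ≤ k := fun v hv => by
    by_contra! hlt
    have huniv : leafIndices p S v = univ :=
      eq_univ_of_card _ ((card_le_univ _).antisymm (by omega))
    have := card_filter_adj_le_of_leafIndices_eq_univ hG huniv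
    have := hdeg v hv
    omega
  have hsum : ∑ v ∈ S, #(leafIndices p S v) = ∑ _v ∈ S, k := by
    refine le_antisymm (sum_le_sum hle) ?_
    have h2k : ∑ _v ∈ S, 2 * k ≤ ∑ v ∈ S, #{w ∈ S | G.Adj v w} := sum_le_sum hdeg
    have := sum_card_filter_adj_le (S := S) hG
    rw [← mul_sum] at h2k
    omega
  exact (sum_eq_sum_iff_of_le hle).1 hsum

/-- Along an edge of `starForest (p i)` the center gets colour `i`, while `i` is a leaf index of
the other end. -/
theorem isProperOn_of_leafIndices (hG : G ≤ ⨆ i, starForest (p i)) {σ : V → ι}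
    (hσ : ∀ v ∈ S, ∀ i, σ v = i ↔ i ∉ leafIndices p S v) : G.IsProperOn S σ := by
  have hcenter : ∀ i, ∀ u ∈ S, ∀ v ∈ S, u ≠ v → p i u = v → p i v = v → σ u ≠ σ v :=
    fun i u hu v hv hne hu' hv' => by
      rw [(hσ v hv i).2 (fun h => (mem_leafIndices.1 h).1 hv'), Ne, hσ u hu, not_not]
      exact mem_leafIndices.2 ⟨hu' ▸ hne.symm, hu' ▸ hv⟩
  intro u hu v hv huv
  obtain ⟨i, hi⟩ := SimpleGraph.iSup_adj.1 (hG huv)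
  obtain ⟨hne, ⟨hu', hv'⟩ | ⟨hv', hu'⟩⟩ := starForest_adj.1 hi
  · exact hcenter i u hu v hv hne hu' hv'
  · exact (hcenter i v hv u hu hne.symm hv' hu').symm

theorem exists_isProperOn_of_le_iSup_starForest [DecidableRel G.Adj] {k : ℕ} (hk : 2 ≤ k)
    (hι : Fintype.card ι = k + 1) (hG : G ≤ ⨆ i, starForest (p i))
    (hdeg : ∀ v ∈ S, 2 * k ≤ #{w ∈ S | G.Adj v w}) : ∃ σ : V → ι, G.IsProperOn S σ := by
  classical
  have : Nonempty ι := Fintype.card_pos_iff.1 (by omega)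
  have hunique : ∀ v, ∃ i, v ∈ S → ∀ j, j = i ↔ j ∉ leafIndices p S v := fun v => by
    by_cases hv : v ∈ S
    · have : #(leafIndices p S v)ᶜ = 1 := by
        rw [card_compl, card_leafIndices_eq hk hι hG hdeg v hv]
        omega
      obtain ⟨i, hi⟩ := card_eq_one.1 this
      exact ⟨i, fun _ j => by rw [← mem_compl, hi, mem_singleton]⟩
    · exact ⟨Classical.arbitrary ι, fun h => absurd h hv⟩
  choose σ hσ using hunique
  exact ⟨σ, isProperOn_of_leafIndices hG fun v hv i => by rw [eq_comm, hσ v hv i]⟩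

end StarForestCover

/-- For `k ≥ 2`, every graph which is the union of `k + 1` galaxies on the same
vertex set has chromatic number at most `2k`. -/
theorem stmt16 (k : ℕ) (hk : 2 ≤ k) {V : Type} [Fintype V] (G : SimpleGraph V)
    (H : Fin (k + 1) → SimpleGraph V) (hH : ∀ i, IsGalaxy (H i))
    (hG : G = ⨆ i, H i) :
    G.chromaticNumber ≤ ((2 * k : ℕ) : ℕ∞) := by
  classical
  choose p hp using fun i => (hH i).exists_le_starForest
  have hG' : G ≤ ⨆ i, starForest (p i) := hG ▸ iSup_mono hp
  obtain ⟨f, hf⟩ : ∃ f : V → Fin (2 * k), G.IsProperOn univ f := by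
    refine G.exists_isProperOn_of_forall_minDegree (fun S hS => ?_) univ
    obtain ⟨σ, hσ⟩ := exists_isProperOn_of_le_iSup_starForest hk (Fintype.card_fin _) hG'
      (by simpa using hS)
    exact ⟨Fin.castLE (by omega) ∘ σ,
      fun u hu v hv huv h => hσ u hu v hv huv (Fin.castLE_injective _ h)⟩
  have hcol : G.Colorable (2 * k) :=
    by simpa using (Coloring.mk f fun h => hf _ (mem_univ _) _ (mem_univ _) h).colorable
  exact hcol.chromaticNumber_le
end

section
/- Let k be a positive integer and let G be a graph that is the union of k graphs on the same vertex set, each of whose connected components is a path with at most two edges. Then 3·(χ(G) − 1) ≤ 4k, i.e., χ(G) ≤ 4k/3 + 1. -/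
open SimpleGraph

/-- A short-paths graph: every connected component is a path with at most two
edges; equivalently, every connected component has at most `3` vertices and the
graph is triangle-free. -/
def IsShortPathsGraph {V : Type*} (H : SimpleGraph V) : Prop :=
  (∀ C : H.ConnectedComponent, C.supp.ncard ≤ 3) ∧ H.CliqueFree 3

open scoped Classical in
/-- Greedy coloring from a degeneracy-type hypothesis. -/
lemma aux_color {V : Type} (G : SimpleGraph V) (d : ℕ)
    (h : ∀ s : Finset V, s.Nonempty → ∃ v ∈ s, (s.filter (G.Adj v)).card ≤ d) :
    ∀ s : Finset V, ∃ f : V → Fin (d + 1), ∀ v ∈ s, ∀ w ∈ s, G.Adj v w → f v ≠ f w := by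
  intro s
  induction s using Finset.strongInduction with
  | _ s ih =>
    rcases s.eq_empty_or_nonempty with rfl | hs
    · exact ⟨fun _ => 0, by simp⟩
    obtain ⟨v, hv, hdeg⟩ := h s hs
    obtain ⟨f, hf⟩ := ih (s.erase v) (Finset.erase_ssubset hv)
    set T : Finset (Fin (d + 1)) := ((s.erase v).filter (G.Adj v)).image f with hT
    have hTcard : T.card < d + 1 := by
      calc T.card ≤ ((s.erase v).filter (G.Adj v)).card := Finset.card_image_le
        _ ≤ (s.filter (G.Adj v)).card :=
            Finset.card_le_card (Finset.filter_subset_filter _ (Finset.erase_subset _ _))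
        _ ≤ d := hdeg
        _ < d + 1 := Nat.lt_succ_self d
    have : ∃ c : Fin (d + 1), c ∉ T := by
      by_contra hc
      push_neg at hc
      have : T = Finset.univ := Finset.eq_univ_iff_forall.mpr hc
      rw [this] at hTcard
      simp at hTcard
    obtain ⟨c, hc⟩ := this
    refine ⟨Function.update f v c, ?_⟩
    intro x hx y hy hadj
    by_cases hxv : x = v <;> by_cases hyv : y = v
    · subst hxv hyv; exact absurd hadj (G.irrefl)
    · subst hxv
      rw [Function.update_self, Function.update_of_ne hyv]
      intro hcy
      apply hc
      rw [hcy]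
      exact Finset.mem_image_of_mem f
        (Finset.mem_filter.mpr ⟨Finset.mem_erase.mpr ⟨hyv, hy⟩, hadj⟩)
    · subst hyv
      rw [Function.update_self, Function.update_of_ne hxv]
      intro hcx
      exact hc (hcx ▸ Finset.mem_image_of_mem f
        (Finset.mem_filter.mpr ⟨Finset.mem_erase.mpr ⟨hxv, hx⟩, hadj.symm⟩))
    · rw [Function.update_of_ne hxv, Function.update_of_ne hyv]
      exact hf x (Finset.mem_erase.mpr ⟨hxv, hx⟩) y (Finset.mem_erase.mpr ⟨hyv, hy⟩) hadj

open scoped Classical in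
/-- Degree sum within a triangle-free set of at most 3 vertices. -/
lemma aux_tri {V : Type} (H : SimpleGraph V) (hcf : H.CliqueFree 3)
    (t : Finset V) (ht : t.card ≤ 3) :
    3 * ∑ v ∈ t, (t.filter (H.Adj v)).card ≤ 4 * t.card := by
  have key : ∀ v, (t.filter (H.Adj v)).card = ∑ w ∈ t, if H.Adj v w then 1 else 0 := by
    intro v; rw [Finset.card_filter]
  interval_cases hc : t.card
  · obtain rfl := Finset.card_eq_zero.mp hc
    simp
  · obtain ⟨a, rfl⟩ := Finset.card_eq_one.mp hc
    rw [Finset.sum_singleton, Finset.filter_singleton]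
    simp [H.irrefl]
  · obtain ⟨a, b, hab, rfl⟩ := Finset.card_eq_two.mp hc
    have hba : H.Adj b a ↔ H.Adj a b := H.adj_comm b a
    simp only [key, Finset.sum_insert, Finset.sum_singleton, Finset.mem_singleton, hab,
      not_false_iff, H.irrefl, if_false, hba]
    by_cases h : H.Adj a b <;> simp [h]
  · obtain ⟨a, b, c, hab, hac, hbc, rfl⟩ := Finset.card_eq_three.mp hc
    have htri : ¬(H.Adj a b ∧ H.Adj a c ∧ H.Adj b c) := by
      intro ⟨h1, h2, h3⟩
      exact hcf {a, b, c} (is3Clique_triple_iff.mpr ⟨h1, h2, h3⟩)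
    have hba : H.Adj b a ↔ H.Adj a b := H.adj_comm b a
    have hca : H.Adj c a ↔ H.Adj a c := H.adj_comm c a
    have hcb : H.Adj c b ↔ H.Adj b c := H.adj_comm c b
    have hmem : a ∉ ({b, c} : Finset V) := by simp [hab, hac]
    have hmem2 : b ∉ ({c} : Finset V) := by simp [hbc]
    simp only [key, Finset.sum_insert hmem, Finset.sum_insert hmem2, Finset.sum_singleton,
      H.irrefl, if_false, hba, hca, hcb]
    by_cases h1 : H.Adj a b <;> by_cases h2 : H.Adj a c <;> by_cases h3 : H.Adj b c <;>
      simp [h1, h2, h3] at htri ⊢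

open scoped Classical in
/-- The degree-sum bound for a single short-paths graph. -/
lemma aux_sum {V : Type} [Fintype V] (H : SimpleGraph V) (hH : IsShortPathsGraph H)
    (s : Finset V) :
    3 * ∑ v ∈ s, (s.filter (H.Adj v)).card ≤ 4 * s.card := by
  set mk := H.connectedComponentMk with hmk
  have hmaps : ∀ v ∈ s, mk v ∈ s.image mk := fun v hv => Finset.mem_image_of_mem mk hv
  rw [← Finset.sum_fiberwise_of_maps_to hmaps (fun v => (s.filter (H.Adj v)).card)]
  have hcard : s.card = ∑ C ∈ s.image mk, (s.filter fun v => mk v = C).card := by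
    simp only [Finset.card_eq_sum_ones]
    exact (Finset.sum_fiberwise_of_maps_to hmaps (fun _ => 1)).symm
  rw [hcard, Finset.mul_sum, Finset.mul_sum]
  apply Finset.sum_le_sum
  intro C _
  set t := s.filter fun v => mk v = C with hts
  have hsub : ∀ v ∈ t, s.filter (H.Adj v) = t.filter (H.Adj v) := by
    intro v hv
    obtain ⟨hvs, hvC⟩ := Finset.mem_filter.mp hv
    ext w
    simp only [hts, Finset.mem_filter, and_assoc]
    constructor
    · rintro ⟨hws, hadj⟩
      refine ⟨hws, ?_, hadj⟩
      rw [← hvC, hmk]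
      exact (SimpleGraph.ConnectedComponent.sound hadj.symm.reachable)
    · rintro ⟨hws, _, hadj⟩; exact ⟨hws, hadj⟩
  have ht3 : t.card ≤ 3 := by
    have hsupp : (t : Set V) ⊆ C.supp := by
      intro v hv
      obtain ⟨_, hvC⟩ := Finset.mem_filter.mp (by exact_mod_cast hv : v ∈ t)
      exact hvC
    calc t.card = (t : Set V).ncard := (Set.ncard_coe_finset t).symm
      _ ≤ C.supp.ncard := Set.ncard_le_ncard hsupp (Set.toFinite _)
      _ ≤ 3 := hH.1 C
  calc 3 * ∑ v ∈ t, (s.filter (H.Adj v)).card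
      = 3 * ∑ v ∈ t, (t.filter (H.Adj v)).card := by
        congr 1; exact Finset.sum_congr rfl fun v hv => by rw [hsub v hv]
    _ ≤ 4 * t.card := aux_tri H hH.2 t ht3

/-- Every graph `G` which is a union of `k` short-paths graphs on the same
vertex set satisfies `3(χ(G) - 1) ≤ 4k`, i.e. `χ(G) ≤ 4k/3 + 1`. -/
theorem stmt17 (k : ℕ) (hk : 0 < k) {V : Type} [Fintype V] (G : SimpleGraph V)
    (H : Fin k → SimpleGraph V) (hH : ∀ i, IsShortPathsGraph (H i))
    (hG : G = ⨆ i, H i) :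
    ∀ n : ℕ, G.chromaticNumber = (n : ℕ∞) → 3 * (n - 1) ≤ 4 * k := by
  classical
  set d := 4 * k / 3 with hd
  have hdeg : ∀ s : Finset V, s.Nonempty → ∃ v ∈ s, (s.filter (G.Adj v)).card ≤ d := by
    intro s hs
    have htotal : 3 * ∑ v ∈ s, (s.filter (G.Adj v)).card ≤ 4 * k * s.card := by
      have hv : ∀ v : V, (s.filter (G.Adj v)).card ≤
          ∑ i : Fin k, (s.filter ((H i).Adj v)).card := by
        intro v
        calc (s.filter (G.Adj v)).card
            ≤ (Finset.univ.biUnion fun i : Fin k => s.filter ((H i).Adj v)).card := by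
              apply Finset.card_le_card
              intro w hw
              obtain ⟨hws, hadj⟩ := Finset.mem_filter.mp hw
              rw [hG, SimpleGraph.iSup_adj] at hadj
              obtain ⟨i, hi⟩ := hadj
              exact Finset.mem_biUnion.mpr ⟨i, Finset.mem_univ i,
                Finset.mem_filter.mpr ⟨hws, hi⟩⟩
          _ ≤ ∑ i : Fin k, (s.filter ((H i).Adj v)).card := Finset.card_biUnion_le
      calc 3 * ∑ v ∈ s, (s.filter (G.Adj v)).card
          ≤ 3 * ∑ v ∈ s, ∑ i : Fin k, (s.filter ((H i).Adj v)).card := by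
            apply Nat.mul_le_mul_left
            exact Finset.sum_le_sum fun v _ => hv v
        _ = ∑ i : Fin k, 3 * ∑ v ∈ s, (s.filter ((H i).Adj v)).card := by
            rw [Finset.sum_comm, Finset.mul_sum]
        _ ≤ ∑ i : Fin k, 4 * s.card := Finset.sum_le_sum fun i _ => aux_sum (H i) (hH i) s
        _ = 4 * k * s.card := by
            rw [Finset.sum_const, Finset.card_univ, Fintype.card_fin, smul_eq_mul]; ring
    by_contra hcon
    push_neg at hcon
    have hlt : ∀ v ∈ s, 4 * k < 3 * (s.filter (G.Adj v)).card := by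
      intro v hv
      have := hcon v hv
      rw [hd] at this
      omega
    have : 4 * k * s.card < 3 * ∑ v ∈ s, (s.filter (G.Adj v)).card := by
      rw [Finset.mul_sum]
      calc 4 * k * s.card = ∑ _v ∈ s, 4 * k := by
            rw [Finset.sum_const, smul_eq_mul, mul_comm]
        _ < ∑ v ∈ s, 3 * (s.filter (G.Adj v)).card :=
            Finset.sum_lt_sum_of_nonempty hs hlt
    exact absurd htotal (Nat.not_le.mpr this)
  obtain ⟨f, hf⟩ := aux_color G d hdeg Finset.univ
  have hcol : G.Colorable (d + 1) :=
    ⟨SimpleGraph.Coloring.mk f fun {v w} hadj =>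
      hf v (Finset.mem_univ v) w (Finset.mem_univ w) hadj⟩
  intro n hn
  have hle : (n : ℕ∞) ≤ (d + 1 : ℕ) := hn ▸ hcol.chromaticNumber_le
  have hn' : n ≤ d + 1 := by exact_mod_cast hle
  have h3d : 3 * d ≤ 4 * k := by
    rw [hd, mul_comm]
    exact Nat.div_mul_le_self (4 * k) 3
  omega
end

section
/- For every even integer d ≥ 4 and every positive integer N, there exist an integer n ≥ N with n divisible by 3 and a set E of triples E ⊆ [n] × [n] × [n] (a 3-partite 3-uniform hypergraph with parts of size n, without repeated edges) such that every element of [n] occurs in exactly d triples of E as a first coordinate, in exactly d triples as a second coordinate, and in exactly d triples as a third coordinate, and every matching in E (i.e., every subset of E in which any two distinct triples differ in all three coordinates) has size at most 2n/3. In particular, since 2n/3 < ⌈(d−1)n/d⌉ for d ≥ 4, this disproves the conjecture of Aharoni, Charbit and Howard that every d-regular n×n×n 3-partite 3-uniform hypergraph without repeated edges has a matching of size at least ⌈(d−1)n/d⌉. -/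
open Finset

section Aux

variable (q p : ℕ) [NeZero q] (hpq : p ≤ q)
set_option linter.unusedSectionVars false

/-- structured vertex type: 2q specials + q normals -/
abbrev SpV := (Fin 2 × Fin q) ⊕ Fin q

def g0 (x : (Fin 2 × Fin q) × Fin p) : SpV q × SpV q × SpV q :=
  (.inl x.1, .inl x.1, .inr (x.1.2 + Fin.castLE hpq x.2))

def g1 (x : (Fin 2 × Fin q) × Fin p) : SpV q × SpV q × SpV q :=
  (.inl x.1, .inr (x.1.2 + Fin.castLE hpq x.2), .inl x.1)

def g2 (x : (Fin 2 × Fin q) × Fin p) : SpV q × SpV q × SpV q :=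
  (.inr (x.1.2 + Fin.castLE hpq x.2), .inl x.1, .inl x.1)

lemma g0_inj : Function.Injective (g0 q p hpq) := by
  rintro ⟨i, j⟩ ⟨i', j'⟩ h
  simp only [g0, Prod.mk.injEq, Sum.inl.injEq, Sum.inr.injEq] at h
  obtain ⟨h1, h2, h3⟩ := h
  subst h1
  have := add_left_cancel h3
  exact Prod.ext rfl (Fin.castLE_injective hpq this)

lemma g1_inj : Function.Injective (g1 q p hpq) := by
  rintro ⟨i, j⟩ ⟨i', j'⟩ h
  simp only [g1, Prod.mk.injEq, Sum.inl.injEq, Sum.inr.injEq] at h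
  obtain ⟨h1, h2, h3⟩ := h
  subst h1
  have := add_left_cancel h2
  exact Prod.ext rfl (Fin.castLE_injective hpq this)

lemma g2_inj : Function.Injective (g2 q p hpq) := by
  rintro ⟨i, j⟩ ⟨i', j'⟩ h
  simp only [g2, Prod.mk.injEq, Sum.inl.injEq, Sum.inr.injEq] at h
  obtain ⟨h1, h2, h3⟩ := h
  subst h2
  have := add_left_cancel h1
  exact Prod.ext rfl (Fin.castLE_injective hpq this)

/-- count of pairs with fixed special index -/
lemma count_fixed (i₀ : Fin 2 × Fin q) :
    (univ.filter fun x : (Fin 2 × Fin q) × Fin p => x.1 = i₀).card = p := by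
  have : (univ.filter fun x : (Fin 2 × Fin q) × Fin p => x.1 = i₀)
      = {i₀} ×ˢ univ := by
    ext x
    simp only [mem_filter, mem_univ, true_and, Finset.mem_product,
      Finset.mem_singleton, and_true]
  rw [this, Finset.card_product, Finset.card_singleton, Finset.card_univ,
    Fintype.card_fin, one_mul]

/-- count of pairs with fixed normal target -/
lemma count_target (t : Fin q) :
    (univ.filter fun x : (Fin 2 × Fin q) × Fin p =>
      x.1.2 + Fin.castLE hpq x.2 = t).card = 2 * p := by
  have : (univ.filter fun x : (Fin 2 × Fin q) × Fin p =>
        x.1.2 + Fin.castLE hpq x.2 = t)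
      = Finset.image (fun y : Fin 2 × Fin p => ((y.1, t - Fin.castLE hpq y.2), y.2))
          univ := by
    ext ⟨⟨ε, u⟩, j⟩
    simp only [mem_filter, mem_univ, true_and, mem_image, Prod.mk.injEq]
    constructor
    · intro h
      exact ⟨(ε, j), by simp [eq_sub_of_add_eq h]⟩
    · rintro ⟨⟨ε', j'⟩, h⟩
      obtain ⟨⟨h1, h2⟩, h3⟩ := h
      subst h1 h3 h2
      simp
  rw [this, Finset.card_image_of_injective _ ?_]
  · rw [Finset.card_univ, Fintype.card_prod, Fintype.card_fin, Fintype.card_fin]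
  · rintro ⟨ε, j⟩ ⟨ε', j'⟩ h
    simp only [Prod.mk.injEq] at h
    exact Prod.ext h.1.1 h.2


def ES : Finset (SpV q × SpV q × SpV q) :=
  univ.image (g0 q p hpq) ∪ univ.image (g1 q p hpq) ∪ univ.image (g2 q p hpq)

lemma disj01 : Disjoint (univ.image (g0 q p hpq)) (univ.image (g1 q p hpq)) := by
  simp only [Finset.disjoint_left, mem_image, mem_univ, true_and, forall_exists_index]
  rintro a x rfl ⟨y, hy⟩
  simp [g0, g1, Prod.ext_iff] at hy

lemma disj02 : Disjoint (univ.image (g0 q p hpq)) (univ.image (g2 q p hpq)) := by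
  simp only [Finset.disjoint_left, mem_image, mem_univ, true_and, forall_exists_index]
  rintro a x rfl ⟨y, hy⟩
  simp [g0, g2, Prod.ext_iff] at hy

lemma disj12 : Disjoint (univ.image (g1 q p hpq)) (univ.image (g2 q p hpq)) := by
  simp only [Finset.disjoint_left, mem_image, mem_univ, true_and, forall_exists_index]
  rintro a x rfl ⟨y, hy⟩
  simp [g1, g2, Prod.ext_iff] at hy

lemma card_piece {P : SpV q × SpV q × SpV q → Prop} [DecidablePred P]
    (g : (Fin 2 × Fin q) × Fin p → SpV q × SpV q × SpV q)
    (hg : Function.Injective g) :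
    ((univ.image g).filter P).card = (univ.filter fun x => P (g x)).card := by
  rw [Finset.filter_image, Finset.card_image_of_injective _ hg]

lemma filter_false_card {P : ((Fin 2 × Fin q) × Fin p) → Prop} [DecidablePred P]
    (h : ∀ x, ¬ P x) : (univ.filter P).card = 0 := by
  rw [Finset.filter_false_of_mem (fun x _ => h x), Finset.card_empty]

lemma card_union3 {α : Type*} [DecidableEq α] {A B C : Finset α}
    (hAB : Disjoint A B) (hAC : Disjoint A C) (hBC : Disjoint B C) :
    (A ∪ B ∪ C).card = A.card + B.card + C.card := by
  rw [Finset.card_union_of_disjoint (by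
    exact Finset.disjoint_union_left.2 ⟨hAC, hBC⟩),
    Finset.card_union_of_disjoint hAB]

lemma degS1 (w : SpV q) : ((ES q p hpq).filter (fun e => e.1 = w)).card = 2 * p := by
  rw [ES, Finset.filter_union, Finset.filter_union,
    card_union3 (Finset.disjoint_filter_filter (disj01 q p hpq))
      (Finset.disjoint_filter_filter (disj02 q p hpq))
      (Finset.disjoint_filter_filter (disj12 q p hpq)),
    card_piece q p _ (g0_inj q p hpq), card_piece q p _ (g1_inj q p hpq),
    card_piece q p _ (g2_inj q p hpq)]
  rcases w with i₀ | t
  · have h0 : (univ.filter fun x : (Fin 2 × Fin q) × Fin p =>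
        (g0 q p hpq x).1 = Sum.inl i₀).card = p := by
      rw [Finset.filter_congr (fun x _ => by simp [g0] :
        ∀ x ∈ univ, ((g0 q p hpq x).1 = Sum.inl i₀ ↔ x.1 = i₀))]
      exact count_fixed q p i₀
    have h1 : (univ.filter fun x : (Fin 2 × Fin q) × Fin p =>
        (g1 q p hpq x).1 = Sum.inl i₀).card = p := by
      rw [Finset.filter_congr (fun x _ => by simp [g1] :
        ∀ x ∈ univ, ((g1 q p hpq x).1 = Sum.inl i₀ ↔ x.1 = i₀))]
      exact count_fixed q p i₀
    have h2 : (univ.filter fun x : (Fin 2 × Fin q) × Fin p =>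
        (g2 q p hpq x).1 = Sum.inl i₀).card = 0 :=
      filter_false_card q p (by intro x; simp [g2])
    rw [h0, h1, h2]; omega
  · have h0 : (univ.filter fun x : (Fin 2 × Fin q) × Fin p =>
        (g0 q p hpq x).1 = Sum.inr t).card = 0 :=
      filter_false_card q p (by intro x; simp [g0])
    have h1 : (univ.filter fun x : (Fin 2 × Fin q) × Fin p =>
        (g1 q p hpq x).1 = Sum.inr t).card = 0 :=
      filter_false_card q p (by intro x; simp [g1])
    have h2 : (univ.filter fun x : (Fin 2 × Fin q) × Fin p =>
        (g2 q p hpq x).1 = Sum.inr t).card = 2 * p := by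
      rw [Finset.filter_congr (fun x _ => by simp [g2] :
        ∀ x ∈ univ, ((g2 q p hpq x).1 = Sum.inr t ↔ x.1.2 + Fin.castLE hpq x.2 = t))]
      exact count_target q p hpq t
    rw [h0, h1, h2]; omega

lemma degS2 (w : SpV q) : ((ES q p hpq).filter (fun e => e.2.1 = w)).card = 2 * p := by
  rw [ES, Finset.filter_union, Finset.filter_union,
    card_union3 (Finset.disjoint_filter_filter (disj01 q p hpq))
      (Finset.disjoint_filter_filter (disj02 q p hpq))
      (Finset.disjoint_filter_filter (disj12 q p hpq)),
    card_piece q p _ (g0_inj q p hpq), card_piece q p _ (g1_inj q p hpq),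
    card_piece q p _ (g2_inj q p hpq)]
  rcases w with i₀ | t
  · have h0 : (univ.filter fun x : (Fin 2 × Fin q) × Fin p =>
        (g0 q p hpq x).2.1 = Sum.inl i₀).card = p := by
      rw [Finset.filter_congr (fun x _ => by simp [g0] :
        ∀ x ∈ univ, ((g0 q p hpq x).2.1 = Sum.inl i₀ ↔ x.1 = i₀))]
      exact count_fixed q p i₀
    have h1 : (univ.filter fun x : (Fin 2 × Fin q) × Fin p =>
        (g1 q p hpq x).2.1 = Sum.inl i₀).card = 0 :=
      filter_false_card q p (by intro x; simp [g1])
    have h2 : (univ.filter fun x : (Fin 2 × Fin q) × Fin p =>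
        (g2 q p hpq x).2.1 = Sum.inl i₀).card = p := by
      rw [Finset.filter_congr (fun x _ => by simp [g2] :
        ∀ x ∈ univ, ((g2 q p hpq x).2.1 = Sum.inl i₀ ↔ x.1 = i₀))]
      exact count_fixed q p i₀
    rw [h0, h1, h2]; omega
  · have h0 : (univ.filter fun x : (Fin 2 × Fin q) × Fin p =>
        (g0 q p hpq x).2.1 = Sum.inr t).card = 0 :=
      filter_false_card q p (by intro x; simp [g0])
    have h1 : (univ.filter fun x : (Fin 2 × Fin q) × Fin p =>
        (g1 q p hpq x).2.1 = Sum.inr t).card = 2 * p := by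
      rw [Finset.filter_congr (fun x _ => by simp [g1] :
        ∀ x ∈ univ, ((g1 q p hpq x).2.1 = Sum.inr t ↔ x.1.2 + Fin.castLE hpq x.2 = t))]
      exact count_target q p hpq t
    have h2 : (univ.filter fun x : (Fin 2 × Fin q) × Fin p =>
        (g2 q p hpq x).2.1 = Sum.inr t).card = 0 :=
      filter_false_card q p (by intro x; simp [g2])
    rw [h0, h1, h2]; omega

lemma degS3 (w : SpV q) : ((ES q p hpq).filter (fun e => e.2.2 = w)).card = 2 * p := by
  rw [ES, Finset.filter_union, Finset.filter_union,
    card_union3 (Finset.disjoint_filter_filter (disj01 q p hpq))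
      (Finset.disjoint_filter_filter (disj02 q p hpq))
      (Finset.disjoint_filter_filter (disj12 q p hpq)),
    card_piece q p _ (g0_inj q p hpq), card_piece q p _ (g1_inj q p hpq),
    card_piece q p _ (g2_inj q p hpq)]
  rcases w with i₀ | t
  · have h0 : (univ.filter fun x : (Fin 2 × Fin q) × Fin p =>
        (g0 q p hpq x).2.2 = Sum.inl i₀).card = 0 :=
      filter_false_card q p (by intro x; simp [g0])
    have h1 : (univ.filter fun x : (Fin 2 × Fin q) × Fin p =>
        (g1 q p hpq x).2.2 = Sum.inl i₀).card = p := by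
      rw [Finset.filter_congr (fun x _ => by simp [g1] :
        ∀ x ∈ univ, ((g1 q p hpq x).2.2 = Sum.inl i₀ ↔ x.1 = i₀))]
      exact count_fixed q p i₀
    have h2 : (univ.filter fun x : (Fin 2 × Fin q) × Fin p =>
        (g2 q p hpq x).2.2 = Sum.inl i₀).card = p := by
      rw [Finset.filter_congr (fun x _ => by simp [g2] :
        ∀ x ∈ univ, ((g2 q p hpq x).2.2 = Sum.inl i₀ ↔ x.1 = i₀))]
      exact count_fixed q p i₀
    rw [h0, h1, h2]; omega
  · have h0 : (univ.filter fun x : (Fin 2 × Fin q) × Fin p =>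
        (g0 q p hpq x).2.2 = Sum.inr t).card = 2 * p := by
      rw [Finset.filter_congr (fun x _ => by simp [g0] :
        ∀ x ∈ univ, ((g0 q p hpq x).2.2 = Sum.inr t ↔ x.1.2 + Fin.castLE hpq x.2 = t))]
      exact count_target q p hpq t
    have h1 : (univ.filter fun x : (Fin 2 × Fin q) × Fin p =>
        (g1 q p hpq x).2.2 = Sum.inr t).card = 0 :=
      filter_false_card q p (by intro x; simp [g1])
    have h2 : (univ.filter fun x : (Fin 2 × Fin q) × Fin p =>
        (g2 q p hpq x).2.2 = Sum.inr t).card = 0 :=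
      filter_false_card q p (by intro x; simp [g2])
    rw [h0, h1, h2]; omega

/-- the special index of an edge -/
def gg (e : SpV q × SpV q × SpV q) : Fin 2 × Fin q :=
  Sum.elim id (fun _ => Sum.elim id (fun _ => ((0 : Fin 2), (0 : Fin q))) e.1) e.2.1

lemma matchS (M : Finset (SpV q × SpV q × SpV q)) (hM : M ⊆ ES q p hpq)
    (hm : ∀ e ∈ M, ∀ f ∈ M, e ≠ f →
      e.1 ≠ f.1 ∧ e.2.1 ≠ f.2.1 ∧ e.2.2 ≠ f.2.2) :
    M.card ≤ 2 * q := by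
  have hinj : Set.InjOn (gg q) M := by
    intro e he f hf hgf
    by_contra hne
    obtain ⟨h1, h2, h3⟩ := hm e he f hf hne
    have he' := hM he
    have hf' := hM hf
    simp only [ES, mem_union, mem_image, mem_univ, true_and] at he' hf'
    rcases he' with (⟨x, rfl⟩ | ⟨x, rfl⟩) | ⟨x, rfl⟩
    · rcases hf' with (⟨y, rfl⟩ | ⟨y, rfl⟩) | ⟨y, rfl⟩
      · have hxy : x.1 = y.1 := by simpa [gg, g0, g1, g2] using hgf
        exact h1 (by simp [g0, g1, g2, hxy])
      · have hxy : x.1 = y.1 := by simpa [gg, g0, g1, g2] using hgf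
        exact h1 (by simp [g0, g1, g2, hxy])
      · have hxy : x.1 = y.1 := by simpa [gg, g0, g1, g2] using hgf
        exact h2 (by simp [g0, g1, g2, hxy])
    · rcases hf' with (⟨y, rfl⟩ | ⟨y, rfl⟩) | ⟨y, rfl⟩
      · have hxy : x.1 = y.1 := by simpa [gg, g0, g1, g2] using hgf
        exact h1 (by simp [g0, g1, g2, hxy])
      · have hxy : x.1 = y.1 := by simpa [gg, g0, g1, g2] using hgf
        exact h1 (by simp [g0, g1, g2, hxy])
      · have hxy : x.1 = y.1 := by simpa [gg, g0, g1, g2] using hgf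
        exact h3 (by simp [g0, g1, g2, hxy])
    · rcases hf' with (⟨y, rfl⟩ | ⟨y, rfl⟩) | ⟨y, rfl⟩
      · have hxy : x.1 = y.1 := by simpa [gg, g0, g1, g2] using hgf
        exact h2 (by simp [g0, g1, g2, hxy])
      · have hxy : x.1 = y.1 := by simpa [gg, g0, g1, g2] using hgf
        exact h3 (by simp [g0, g1, g2, hxy])
      · have hxy : x.1 = y.1 := by simpa [gg, g0, g1, g2] using hgf
        exact h2 (by simp [g0, g1, g2, hxy])
  calc M.card ≤ (univ : Finset (Fin 2 × Fin q)).card :=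
        Finset.card_le_card_of_injOn (gg q) (fun _ _ => mem_univ _) hinj
  _ = 2 * q := by
        rw [Finset.card_univ, Fintype.card_prod, Fintype.card_fin, Fintype.card_fin]

end Aux

theorem aux_main (q p : ℕ) (hq : 0 < q) (hpq : p ≤ q) :
    ∃ E : Finset (Fin (3*q) × Fin (3*q) × Fin (3*q)),
      (∀ v, (E.filter (fun e => e.1 = v)).card = 2*p) ∧
      (∀ v, (E.filter (fun e => e.2.1 = v)).card = 2*p) ∧
      (∀ v, (E.filter (fun e => e.2.2 = v)).card = 2*p) ∧
      ∀ M ⊆ E, (∀ e ∈ M, ∀ f ∈ M, e ≠ f →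
          e.1 ≠ f.1 ∧ e.2.1 ≠ f.2.1 ∧ e.2.2 ≠ f.2.2) →
        M.card ≤ 2 * q := by
  haveI : NeZero q := ⟨hq.ne'⟩
  let ve : SpV q ≃ Fin (3*q) :=
    ((Equiv.sumCongr finProdFinEquiv (Equiv.refl (Fin q))).trans
      finSumFinEquiv).trans (finCongr (by ring))
  let tm : SpV q × SpV q × SpV q → Fin (3*q) × Fin (3*q) × Fin (3*q) :=
    fun e => (ve e.1, ve e.2.1, ve e.2.2)
  have tm_inj : Function.Injective tm := by
    rintro ⟨a, b, c⟩ ⟨a', b', c'⟩ h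
    simp only [tm, Prod.mk.injEq] at h
    exact Prod.ext (ve.injective h.1)
      (Prod.ext (ve.injective h.2.1) (ve.injective h.2.2))
  refine ⟨(ES q p hpq).image tm, ?_, ?_, ?_, ?_⟩
  · intro v
    rw [Finset.filter_image, Finset.card_image_of_injective _ tm_inj,
      Finset.filter_congr (fun e _ => ?_ :
        ∀ e ∈ ES q p hpq, (tm e).1 = v ↔ e.1 = ve.symm v)]
    · exact degS1 q p hpq (ve.symm v)
    · exact Equiv.apply_eq_iff_eq_symm_apply ve
  · intro v
    rw [Finset.filter_image, Finset.card_image_of_injective _ tm_inj,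
      Finset.filter_congr (fun e _ => ?_ :
        ∀ e ∈ ES q p hpq, (tm e).2.1 = v ↔ e.2.1 = ve.symm v)]
    · exact degS2 q p hpq (ve.symm v)
    · exact Equiv.apply_eq_iff_eq_symm_apply ve
  · intro v
    rw [Finset.filter_image, Finset.card_image_of_injective _ tm_inj,
      Finset.filter_congr (fun e _ => ?_ :
        ∀ e ∈ ES q p hpq, (tm e).2.2 = v ↔ e.2.2 = ve.symm v)]
    · exact degS3 q p hpq (ve.symm v)
    · exact Equiv.apply_eq_iff_eq_symm_apply ve
  · intro M hM hcond
    let sm : Fin (3*q) × Fin (3*q) × Fin (3*q) → SpV q × SpV q × SpV q :=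
      fun e => (ve.symm e.1, ve.symm e.2.1, ve.symm e.2.2)
    have sm_tm : ∀ u, sm (tm u) = u := by
      rintro ⟨a, b, c⟩
      simp [sm, tm]
    have sm_inj : Function.Injective sm := by
      rintro ⟨a, b, c⟩ ⟨a', b', c'⟩ h
      simp only [sm, Prod.mk.injEq] at h
      exact Prod.ext (ve.symm.injective h.1)
        (Prod.ext (ve.symm.injective h.2.1) (ve.symm.injective h.2.2))
    have hsub : M.image sm ⊆ ES q p hpq := by
      intro a ha
      simp only [mem_image] at ha
      obtain ⟨e, he, rfl⟩ := ha
      have := hM he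
      simp only [mem_image] at this
      obtain ⟨u, hu, rfl⟩ := this
      rwa [sm_tm]
    have hcond' : ∀ e ∈ M.image sm, ∀ f ∈ M.image sm, e ≠ f →
        e.1 ≠ f.1 ∧ e.2.1 ≠ f.2.1 ∧ e.2.2 ≠ f.2.2 := by
      intro e he f hf hne
      simp only [mem_image] at he hf
      obtain ⟨e₀, he₀, rfl⟩ := he
      obtain ⟨f₀, hf₀, rfl⟩ := hf
      have hne₀ : e₀ ≠ f₀ := fun h => hne (by rw [h])
      obtain ⟨h1, h2, h3⟩ := hcond e₀ he₀ f₀ hf₀ hne₀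
      exact ⟨fun h => h1 (ve.symm.injective h), fun h => h2 (ve.symm.injective h),
        fun h => h3 (ve.symm.injective h)⟩
    have := matchS q p hpq (M.image sm) hsub hcond'
    rwa [Finset.card_image_of_injective _ sm_inj] at this

/-- For every even `d ≥ 4` and every `N`, there exist `n ≥ N` divisible by `3`
and a `d`-regular `n × n × n` `3`-partite `3`-uniform hypergraph (a set of
triples, with no repeated edges, in which every vertex lies in exactly `d`
triples in each coordinate) whose every matching has size at most `2n/3`.
This disproves the conjecture of Aharoni, Charbit and Howard. -/
theorem stmt18 (d : ℕ) (hd : 4 ≤ d) (hev : Even d) (N : ℕ) :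
    ∃ n : ℕ, N ≤ n ∧ 3 ∣ n ∧
      ∃ E : Finset (Fin n × Fin n × Fin n),
        (∀ v : Fin n, (E.filter (fun e => e.1 = v)).card = d) ∧
        (∀ v : Fin n, (E.filter (fun e => e.2.1 = v)).card = d) ∧
        (∀ v : Fin n, (E.filter (fun e => e.2.2 = v)).card = d) ∧
        ∀ M ⊆ E, (∀ e ∈ M, ∀ f ∈ M, e ≠ f →
            e.1 ≠ f.1 ∧ e.2.1 ≠ f.2.1 ∧ e.2.2 ≠ f.2.2) →
          M.card ≤ 2 * n / 3 := by
  obtain ⟨p, hp⟩ := hev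
  have hp2 : 2 ≤ p := by omega
  set q := p * (N + 1) with hqdef
  have hq : 0 < q := by positivity
  have hN1 : N + 1 ≤ q := by
    calc N + 1 = 1 * (N + 1) := (one_mul _).symm
    _ ≤ p * (N + 1) := Nat.mul_le_mul_right _ (by omega)
  have hpq : p ≤ q := by
    calc p = p * 1 := (mul_one p).symm
    _ ≤ p * (N + 1) := Nat.mul_le_mul_left _ (by omega)
  obtain ⟨E, h1, h2, h3, h4⟩ := aux_main q p hq hpq
  refine ⟨3 * q, by omega, ⟨q, rfl⟩, E, ?_, ?_, ?_, ?_⟩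
  · intro v; rw [h1 v]; omega
  · intro v; rw [h2 v]; omega
  · intro v; rw [h3 v]; omega
  · intro M hM hMm
    have := h4 M hM hMm
    omega
end

section
/- For every prime power p and every positive integer m, there exists an r-partite r-uniform hypergraph with r = p + 2, with r vertex classes each of size pm, modeled as a set E of edges E ⊆ ∏_{i=1}^{r} [pm] (each edge selects one vertex from each class), with no repeated edges, such that every vertex (i.e., every pair of a class index i ∈ [r] and an element of [pm]) lies in exactly d = p²m edges, and the maximum size of a matching in E is exactly m. In particular, the largest matching covers only a 1/p = 1/(r−2) fraction of the r·pm vertices. -/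
/-!
Take a finite field `K` with `p` elements and `m` disjoint copies of the affine plane `K²`.
An edge is a non-vertical line `y = a x + b` in copy `s`, together with a free "label" vertex
`(c, t)`: on the class of `x ∈ K` it picks the point `(a x + b, s)` of the line, on one extra
class the slope `(a, s)`, and on a last class the label `(c, t)`. In each class the edges through
a fixed vertex are parametrised by three free coordinates, so the hypergraph is `p² m`-regular.
Two lines in the same copy share a vertex: their slope if they are parallel, and otherwise
their intersection point. So a matching uses each copy at most once and has at most `m` edges,
and the lines `y = 0`, one in each copy with label `(0, s)`, form a matching of size `m`.
-/

open Finset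

namespace PartiteHypergraph

variable {ι V ι' V' : Type*}

def IsMatching (M : Finset (ι → V)) : Prop :=
  (M : Set (ι → V)).Pairwise fun e f => ∀ i, e i ≠ f i

def matchingSizes (E : Finset (ι → V)) : Set ℕ :=
  {s | ∃ M ⊆ E, IsMatching M ∧ #M = s}

def IsRegularOfDegree [DecidableEq V] (E : Finset (ι → V)) (d : ℕ) : Prop :=
  ∀ i v, #{e ∈ E | e i = v} = d

variable (σ : ι ≃ ι') (τ : V ≃ V')

theorem isMatching_map_arrowCongr (M : Finset (ι → V)) :
    IsMatching (M.map (σ.arrowCongr τ).toEmbedding) ↔ IsMatching M := by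
  rw [IsMatching, coe_map, (σ.arrowCongr τ).toEmbedding.injective.injOn.pairwise_image,
    IsMatching]
  refine Iff.of_eq (congrArg _ (funext₂ fun e f => propext ?_))
  simp only [Function.onFun, Equiv.coe_toEmbedding, Equiv.arrowCongr_apply, Function.comp_apply,
    τ.injective.ne_iff]
  exact σ.symm.forall_congr_right (q := fun i => e i ≠ f i)

theorem matchingSizes_map_arrowCongr (E : Finset (ι → V)) :
    matchingSizes (E.map (σ.arrowCongr τ).toEmbedding) = matchingSizes E := by
  ext s
  constructor
  · rintro ⟨M', hM', hmatch, rfl⟩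
    obtain ⟨M, hME, rfl⟩ := subset_map_iff.mp hM'
    exact ⟨M, hME, (isMatching_map_arrowCongr σ τ M).mp hmatch, (card_map _).symm⟩
  · rintro ⟨M, hME, hmatch, rfl⟩
    exact ⟨_, map_subset_map.mpr hME, (isMatching_map_arrowCongr σ τ M).mpr hmatch, card_map _⟩

theorem IsRegularOfDegree.map_arrowCongr [DecidableEq V] [DecidableEq V'] {E : Finset (ι → V)}
    {d : ℕ} (hE : IsRegularOfDegree E d) :
    IsRegularOfDegree (E.map (σ.arrowCongr τ).toEmbedding) d := by
  intro i v
  rw [filter_map, card_map, ← hE (σ.symm i) (τ.symm v)]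
  congr 1
  refine filter_congr fun e _ => ?_
  simp [Equiv.eq_symm_apply]

end PartiteHypergraph

theorem Finset.card_filter_fst_equiv_eq {α β γ : Type*} [Fintype α] [Fintype γ] [DecidableEq β]
    (g : α ≃ β × γ) (b : β) : #{a | (g a).1 = b} = Fintype.card γ := by
  refine card_nbij' (fun a => (g a).2) (fun c => g.symm (b, c)) (fun _ _ => mem_coe.mpr
    (mem_univ _)) (fun c _ => by simp) (fun a ha => ?_) (fun c _ => by simp)
  rw [coe_filter, Set.mem_ofPred_eq] at ha
  simp [← ha.2]

namespace LineHypergraph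

open PartiteHypergraph

variable (K : Type*) [Field K] (m : ℕ)

/-- `(a, b, c, s, t)`: the line `y = a x + b` in copy `s`, with label `(c, t)`. -/
abbrev Param := K × K × K × Fin m × Fin m

variable {K m}

/-- Class `inl x` records the point over `x`, `inr false` the slope, `inr true` the label. -/
def edge : Param K m → K ⊕ Bool → K × Fin m
  | (a, b, _, s, _), .inl x => (a * x + b, s)
  | (a, _, _, s, _), .inr false => (a, s)
  | (_, _, c, _, t), .inr true => (c, t)

theorem edge_injective : Function.Injective (edge (K := K) (m := m)) := by
  rintro ⟨a, b, c, s, t⟩ ⟨a', b', c', s', t'⟩ h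
  have hslope := congrFun h (.inr false)
  have hlabel := congrFun h (.inr true)
  have hzero := congrFun h (.inl 0)
  simp_all [edge]

def paramEquiv : K ⊕ Bool → (Param K m ≃ (K × Fin m) × (K × K × Fin m))
  | .inl x =>
    { toFun := fun (a, b, c, s, t) => ((a * x + b, s), (a, c, t))
      invFun := fun ((y, s), (a, c, t)) => (a, y - a * x, c, s, t)
      left_inv := fun _ => by simp
      right_inv := fun _ => by simp }
  | .inr false =>
    { toFun := fun (a, b, c, s, t) => ((a, s), (b, c, t))
      invFun := fun ((a, s), (b, c, t)) => (a, b, c, s, t)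
      left_inv := fun _ => rfl
      right_inv := fun _ => rfl }
  | .inr true =>
    { toFun := fun (a, b, c, s, t) => ((c, t), (a, b, s))
      invFun := fun ((c, t), (a, b, s)) => (a, b, c, s, t)
      left_inv := fun _ => rfl
      right_inv := fun _ => rfl }

theorem paramEquiv_fst (i : K ⊕ Bool) (z : Param K m) : (paramEquiv i z).1 = edge z i := by
  rcases i with _ | _ | _ <;> rfl

theorem exists_edge_eq_of_copy_eq {z z' : Param K m} (h : z.2.2.2.1 = z'.2.2.2.1) :
    ∃ i, edge z i = edge z' i := by
  obtain ⟨a, b, c, s, t⟩ := z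
  obtain ⟨a', b', c', s', t'⟩ := z'
  by_cases ha : a = a'
  · exact ⟨.inr false, by simp_all [edge]⟩
  · refine ⟨.inl ((b' - b) / (a - a')), ?_⟩
    have : a - a' ≠ 0 := sub_ne_zero.mpr ha
    simp only at h
    simp only [edge, h, Prod.mk.injEq, and_true]
    field_simp
    ring

variable (K m) [Fintype K] [DecidableEq K]

def edges : Finset (K ⊕ Bool → K × Fin m) :=
  univ.map ⟨edge, edge_injective⟩

theorem isRegularOfDegree_edges :
    IsRegularOfDegree (edges K m) (Fintype.card K ^ 2 * m) := by
  intro i v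
  have hfiber := card_filter_fst_equiv_eq (paramEquiv (m := m) i) v
  simp only [paramEquiv_fst, Fintype.card_prod, Fintype.card_fin] at hfiber
  rw [edges, filter_map, card_map]
  exact hfiber.trans (by ring)

theorem isMatching_image_diagonal :
    IsMatching ((univ : Finset (Fin m)).image fun s => edge ((0, 0, 0, s, s) : Param K m)) := by
  simp only [IsMatching, coe_image, coe_univ, Set.image_univ]
  rintro _ ⟨s, rfl⟩ _ ⟨s', rfl⟩ hne i h
  obtain rfl : s = s' := by rcases i with _ | _ | _ <;> simp_all [edge]
  exact hne rfl

theorem card_le_of_isMatching {M : Finset (K ⊕ Bool → K × Fin m)} (hME : M ⊆ edges K m)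
    (hM : IsMatching M) : #M ≤ m := by
  have hcopy : Set.InjOn (fun e : K ⊕ Bool → K × Fin m => (e (.inr false)).2) M := by
    intro e he e' he' hs
    by_contra hne
    obtain ⟨z, -, rfl⟩ := mem_map.mp (hME he)
    obtain ⟨z', -, rfl⟩ := mem_map.mp (hME he')
    obtain ⟨i, hi⟩ := exists_edge_eq_of_copy_eq hs
    exact hM he he' hne i hi
  simpa using card_le_card_of_injOn (t := univ) _ (fun _ _ => mem_univ _) hcopy

theorem isGreatest_matchingSizes_edges : IsGreatest (matchingSizes (edges K m)) m := by
  refine ⟨⟨_, ?_, isMatching_image_diagonal K m, ?_⟩, ?_⟩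
  · exact image_subset_iff.mpr fun s _ => mem_map_of_mem _ (mem_univ _)
  · refine (card_image_of_injective _ fun s s' h => ?_).trans (card_fin m)
    simpa [edge] using congrFun h (.inr true)
  · rintro _ ⟨M, hME, hM, rfl⟩
    exact card_le_of_isMatching K m hME hM

end LineHypergraph

theorem exists_finite_field_card_eq {p : ℕ} (hp : IsPrimePow p) :
    ∃ (K : Type) (_ : Field K) (_ : Fintype K), Fintype.card K = p := by
  obtain ⟨q, n, hq, hn, rfl⟩ := hp
  have : Fact q.Prime := ⟨hq.nat_prime⟩
  let := Fintype.ofFinite (GaloisField q n)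
  exact ⟨GaloisField q n, inferInstance, inferInstance, by
    rw [← Nat.card_eq_fintype_card, GaloisField.card q n hn.ne']⟩

theorem stmt19_general (p : ℕ) (hp : IsPrimePow p) (m : ℕ) :
    ∃ E : Finset (Fin (p + 2) → Fin (p * m)),
      (∀ (i : Fin (p + 2)) (v : Fin (p * m)),
        (E.filter (fun e => e i = v)).card = p ^ 2 * m) ∧
      IsGreatest {s : ℕ | ∃ M ⊆ E,
        (∀ e ∈ M, ∀ f ∈ M, e ≠ f → ∀ i, e i ≠ f i) ∧ M.card = s} m := by
  classical
  obtain ⟨K, _, _, hK⟩ := exists_finite_field_card_eq hp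
  obtain ⟨σ⟩ : Nonempty (K ⊕ Bool ≃ Fin (p + 2)) := ⟨Fintype.equivFinOfCardEq (by simp [hK])⟩
  obtain ⟨τ⟩ : Nonempty (K × Fin m ≃ Fin (p * m)) := ⟨Fintype.equivFinOfCardEq (by simp [hK])⟩
  refine ⟨(LineHypergraph.edges K m).map (σ.arrowCongr τ).toEmbedding, ?_, ?_⟩
  · have hreg := (LineHypergraph.isRegularOfDegree_edges K m).map_arrowCongr σ τ
    rwa [hK] at hreg
  · have hmax := LineHypergraph.isGreatest_matchingSizes_edges K m
    rwa [← PartiteHypergraph.matchingSizes_map_arrowCongr σ τ] at hmax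

/-- For every prime power `p` and positive integer `m`, there is an `r`-partite
`r`-uniform hypergraph with `r = p + 2`, vertex classes of size `pm` (edges are
functions picking one vertex from each class, with no repeated edges), which is
regular of degree `d = p² m`, and in which the maximum size of a matching is
exactly `m`; so the largest matching covers only a `1/p = 1/(r-2)` fraction of
the vertices. -/
theorem stmt19 (p : ℕ) (hp : IsPrimePow p) (m : ℕ) (hm : 0 < m) :
    ∃ E : Finset (Fin (p + 2) → Fin (p * m)),
      (∀ (i : Fin (p + 2)) (v : Fin (p * m)),
        (E.filter (fun e => e i = v)).card = p ^ 2 * m) ∧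
      IsGreatest {s : ℕ | ∃ M ⊆ E,
        (∀ e ∈ M, ∀ f ∈ M, e ≠ f → ∀ i, e i ≠ f i) ∧ M.card = s} m :=
  stmt19_general p hp m
end
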